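/- arXiv:1509.05274 — 6 statements merged into one kernel-verified Lean document; each statement's English description precedes it below -/
import Mathlib

section
/- Let X be a compound Poisson process. Then there exists an event A with P(A) = 1 such that for every ω ∈ Ω_X ∩ A, the sample path t ↦ X_t(ω) is slowly growing. -/
open MeasureTheory ProbabilityTheory Filter

noncomputable section

/-- The path of the compound Poisson process `X_t = Σ_{i=1}^{N_t} Y_i`, where
`N_t = #{n ≥ 1 : T_1 + ⋯ + T_n ≤ t}` is the number of jump times up to time `t`. -/
def cppPath {Ω : Type*} (Y T : ℕ → Ω → ℝ) (t : ℝ) (ω : Ω) : ℝ :=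
  ∑ i ∈ Finset.range (Set.ncard {n : ℕ | ∑ j ∈ Finset.range (n + 1), T j ω ≤ t}), Y i ω

/-- The data of a compound Poisson process with rate `lam`: jump heights `(Y_i)` i.i.d.,
inter-arrival times `(T_i)` i.i.d. exponential with parameter `lam`, and the whole family
`(Y_i)_i ∪ (T_i)_i` mutually independent. -/
structure IsCompoundPoisson {Ω : Type*} [MeasurableSpace Ω] (P : Measure Ω)
    (lam : ℝ) (Y T : ℕ → Ω → ℝ) : Prop where
  lam_pos : 0 < lam
  measurableY : ∀ i, Measurable (Y i)
  measurableT : ∀ i, Measurable (T i)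
  indep : iIndepFun (Sum.elim Y T : ℕ ⊕ ℕ → Ω → ℝ) P
  idY : ∀ i, Measure.map (Y i) P = Measure.map (Y 0) P
  expT : ∀ (i : ℕ) (x : ℝ), P {ω | T i ω ≤ x} = ENNReal.ofReal (1 - Real.exp (-(lam * x)))

/-- The Schwartz-space norm `N_p(φ) = Σ_{k,n ≤ p} sup_x ‖x‖^k ‖φ^{(n)}(x)‖`. -/
def schwartzNorm {E : Type*} [NormedAddCommGroup E] [NormedSpace ℝ E] (p : ℕ)
    (φ : SchwartzMap E ℝ) : ℝ :=
  ∑ k ∈ Finset.range (p + 1), ∑ n ∈ Finset.range (p + 1), SchwartzMap.seminorm ℝ k n φ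

/-- The sample path `t ↦ L t ω` defines a tempered distribution via
`φ ↦ ∫_{ℝ₊} L t ω φ(t) dt`. -/
def PathTempered {Ω : Type*} [MeasurableSpace Ω] (L : ℝ → Ω → ℝ) (ω : Ω) : Prop :=
  ∃ (p : ℕ) (C : ℝ), ∀ φ : SchwartzMap ℝ ℝ,
    |∫ t in Set.Ici (0 : ℝ), L t ω * φ t| ≤ C * schwartzNorm p φ

/-- A function on `ℝ₊` is slowly growing if it is bounded by `C (1+|t|)^α` for some `α ≥ 0`. -/
def SlowlyGrowing (f : ℝ → ℝ) : Prop :=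
  ∃ α C : ℝ, 0 ≤ α ∧ ∀ t : ℝ, 0 ≤ t → |f t| ≤ C * (1 + |t|) ^ α

/-!
Almost surely the inter-arrival times `T n` are positive, eventually exceed `(n + 1)⁻²`
(Borel–Cantelli, since `P (T n ≤ x) ≤ λ x`), and their partial sums `S n` grow linearly (strong law
of large numbers). For such an `ω` the path equals `Y 0 + ⋯ + Y (n - 1)` on `[S n, S (n + 1))`.
Testing the tempered distribution against a bump supported in the middle half of that interval,
whose Schwartz norm `N_p` is polynomial in `S (n + 1)` and `(T n)⁻¹`, bounds that value
polynomially in `n`; since the number of jumps before `t` is `O(t)`, the path grows at most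
polynomially.
-/

open Finset Set Metric Asymptotics Topology
open scoped SchwartzMap ENNReal

theorem measure_eq_one_of_ae_mem {α : Type*} [MeasurableSpace α] {μ : Measure α}
    [IsProbabilityMeasure μ] {s : Set α} (h : ∀ᵐ x ∂μ, x ∈ s) : μ s = 1 :=
  (measure_congr (ae_eq_univ.mpr (ae_iff.mp h))).trans measure_univ

theorem iteratedDeriv_eq_zero_of_notMem_tsupport {𝕜 F : Type*} [NontriviallyNormedField 𝕜]
    [NormedAddCommGroup F] [NormedSpace 𝕜 F] {f : 𝕜 → F} {x : 𝕜} (hx : x ∉ tsupport f)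
    (n : ℕ) : iteratedDeriv n f x = 0 := by
  rw [iteratedDeriv_eq_iteratedFDeriv,
    Function.notMem_support.mp fun h => hx (support_iteratedFDeriv_subset n h)]
  rfl

theorem schwartzNorm_nonneg {E : Type*} [NormedAddCommGroup E] [NormedSpace ℝ E] (p : ℕ)
    (φ : 𝓢(E, ℝ)) : 0 ≤ schwartzNorm p φ :=
  sum_nonneg fun _ _ => sum_nonneg fun _ _ => apply_nonneg _ _

theorem exists_mem_Ico_of_tendsto_atTop {α : Type*} [LinearOrder α] [NoMaxOrder α] {u : ℕ → α}
    (hu : Tendsto u atTop atTop) {t : α} (ht : u 0 ≤ t) : ∃ n, t ∈ Ico (u n) (u (n + 1)) := by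
  classical
  have hex : ∃ n, t < u n := (hu.eventually_gt_atTop t).exists
  have hpos : Nat.find hex ≠ 0 := fun h => (Nat.find_spec hex).not_ge (h ▸ ht)
  obtain ⟨n, hn⟩ := Nat.exists_eq_add_one_of_ne_zero hpos
  refine ⟨n, not_lt.mp (Nat.find_min hex (by omega)), ?_⟩
  rw [← hn]
  exact Nat.find_spec hex

theorem eventually_le_mul_of_tendsto_div {u : ℕ → ℝ} {m M : ℝ}
    (h : Tendsto (fun n : ℕ => u n / n) atTop (𝓝 m)) (hM : m < M) :
    ∀ᶠ n : ℕ in atTop, u n ≤ M * n := by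
  filter_upwards [h.eventually_lt_const hM, eventually_gt_atTop 0] with n hn hn0
  exact ((div_lt_iff₀ (Nat.cast_pos.mpr hn0)).mp hn).le

theorem eventually_mul_le_of_tendsto_div {u : ℕ → ℝ} {m M : ℝ}
    (h : Tendsto (fun n : ℕ => u n / n) atTop (𝓝 m)) (hM : M < m) :
    ∀ᶠ n : ℕ in atTop, M * n ≤ u n := by
  filter_upwards [h.eventually_const_lt hM, eventually_gt_atTop 0] with n hn hn0
  exact ((lt_div_iff₀ (Nat.cast_pos.mpr hn0)).mp hn).le

theorem exists_add_one_le_mul_of_eventually_mul_le {u : ℕ → ℝ} {c : ℝ} (hc : 0 < c)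
    (hu : ∀ᶠ n : ℕ in atTop, c * n ≤ u n) :
    ∃ a, ∀ n t, 0 ≤ t → u n ≤ t → (n : ℝ) + 1 ≤ a * (1 + t) := by
  obtain ⟨N, hN⟩ := eventually_atTop.mp hu
  refine ⟨N + c⁻¹ + 1, fun n t ht hnt => ?_⟩
  have hc' : 0 ≤ c⁻¹ * t := by positivity
  rcases le_or_gt N n with hn | hn
  · have : (n : ℝ) ≤ c⁻¹ * t := by
      rw [inv_mul_eq_div, le_div_iff₀ hc, mul_comm]; exact (hN n hn).trans hnt
    nlinarith [mul_nonneg (N.cast_nonneg : (0 : ℝ) ≤ N) (by linarith : (0 : ℝ) ≤ 1 + t),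
      inv_pos.mpr hc]
  · have : (n : ℝ) + 1 ≤ N := by exact_mod_cast hn
    nlinarith [inv_pos.mpr hc]

theorem slowlyGrowing_of_exists_eq {f : ℝ → ℝ} {u : ℕ → ℝ} {D a : ℝ} {k : ℕ}
    (hu : ∀ n, |u n| ≤ D * ((n : ℝ) + 1) ^ k)
    (hf : ∀ t, 0 ≤ t → ∃ n, f t = u n ∧ (n : ℝ) + 1 ≤ a * (1 + t)) : SlowlyGrowing f := by
  have hD : 0 ≤ D := by simpa using (abs_nonneg _).trans (hu 0)
  refine ⟨k, D * a ^ k, k.cast_nonneg, fun t ht => ?_⟩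
  obtain ⟨n, hfn, hn⟩ := hf t ht
  rw [Real.rpow_natCast, abs_of_nonneg ht, hfn]
  calc |u n| ≤ D * ((n : ℝ) + 1) ^ k := hu n
    _ ≤ D * (a * (1 + t)) ^ k := by gcongr
    _ = D * a ^ k * (1 + t) ^ k := by rw [mul_pow, mul_assoc]

namespace CompoundPoisson

def unitBump : ContDiffBump (0 : ℝ) := ⟨1, 2, one_pos, one_lt_two⟩

def scaledBump (c : ℝ) {δ : ℝ} (hδ : 0 < δ) : ContDiffBump c := ⟨δ, 2 * δ, hδ, by linarith⟩

def bumpSchwartz (c : ℝ) {δ : ℝ} (hδ : 0 < δ) : 𝓢(ℝ, ℝ) :=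
  (scaledBump c hδ).hasCompactSupport.toSchwartzMap (scaledBump c hδ).contDiff

section ScaledBump

variable {c δ : ℝ} (hδ : 0 < δ)

theorem coe_bumpSchwartz : ⇑(bumpSchwartz c hδ) = scaledBump c hδ := rfl

theorem scaledBump_apply (x : ℝ) : scaledBump c hδ x = unitBump (δ⁻¹ * x + -(δ⁻¹ * c)) := by
  simp only [ContDiffBump.apply, scaledBump, unitBump, smul_eq_mul, sub_zero, inv_one, one_mul]
  congr 1
  · field_simp
  · ring

theorem iteratedDeriv_scaledBump (n : ℕ) (x : ℝ) :
    iteratedDeriv n (scaledBump c hδ) x =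
      δ⁻¹ ^ n * iteratedDeriv n unitBump (δ⁻¹ * x + -(δ⁻¹ * c)) := by
  have hshift : ContDiff ℝ n fun y => unitBump (y + -(δ⁻¹ * c)) :=
    unitBump.contDiff.comp (contDiff_id.add contDiff_const)
  rw [show (scaledBump c hδ : ℝ → ℝ) = fun x => unitBump (δ⁻¹ * x + -(δ⁻¹ * c)) from
      funext (scaledBump_apply hδ), iteratedDeriv_comp_const_mul hshift,
    iteratedDeriv_comp_add_const]

end ScaledBump

theorem exists_bound_iteratedDeriv_unitBump (p : ℕ) :
    ∃ B, ∀ n ≤ p, ∀ x, |iteratedDeriv n unitBump x| ≤ B := by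
  have hbdd (n : ℕ) : ∃ B, ∀ x, |iteratedDeriv n unitBump x| ≤ B := by
    obtain ⟨B, hB⟩ := (unitBump.hasCompactSupport.iteratedFDeriv n).exists_bound_of_continuous
      (unitBump.contDiff.continuous_iteratedFDeriv (mod_cast le_top))
    exact ⟨B, fun x => by simpa [norm_iteratedFDeriv_eq_norm_iteratedDeriv] using hB x⟩
  choose B hB using hbdd
  exact ⟨∑ n ∈ range (p + 1), |B n|, fun n hn x => (hB n x).trans <| (le_abs_self _).trans <|
    single_le_sum (f := fun n => |B n|) (fun _ _ => abs_nonneg _)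
      (mem_range.mpr (Nat.lt_succ_of_le hn))⟩

theorem exists_schwartzNorm_bumpSchwartz_le (p : ℕ) :
    ∃ K, 0 ≤ K ∧ ∀ c δ (hδ : 0 < δ),
      schwartzNorm p (bumpSchwartz c hδ) ≤ K * ((1 + |c| + 2 * δ) * (1 + δ⁻¹)) ^ p := by
  obtain ⟨B, hB⟩ := exists_bound_iteratedDeriv_unitBump p
  have hB0 : 0 ≤ B := (abs_nonneg _).trans (hB 0 p.zero_le 0)
  refine ⟨(p + 1) ^ 2 * B, by positivity, fun c δ hδ => ?_⟩
  set M := ((1 + |c| + 2 * δ) * (1 + δ⁻¹)) ^ p * B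
  have hseminorm {k n : ℕ} (hk : k ≤ p) (hn : n ≤ p) :
      SchwartzMap.seminorm ℝ k n (bumpSchwartz c hδ) ≤ M := by
    refine SchwartzMap.seminorm_le_bound' ℝ k n _ (by positivity) fun x => ?_
    by_cases hx : x ∈ tsupport (scaledBump c hδ)
    · rw [ContDiffBump.tsupport_eq, mem_closedBall, Real.dist_eq] at hx
      have hxR : |x| ≤ 1 + |c| + 2 * δ := calc
        |x| = |(x - c) + c| := by rw [sub_add_cancel]
        _ ≤ |x - c| + |c| := abs_add_le _ _
        _ ≤ 1 + |c| + 2 * δ := by simp only [scaledBump] at hx; linarith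
      have h1 : |x| ^ k ≤ (1 + |c| + 2 * δ) ^ p :=
        (pow_le_pow_left₀ (abs_nonneg x) (by linarith) k).trans
          (pow_le_pow_right₀ (by linarith [abs_nonneg c]) hk)
      have h2 : δ⁻¹ ^ n ≤ (1 + δ⁻¹) ^ p :=
        (pow_le_pow_left₀ (by positivity) (by linarith) n).trans
          (pow_le_pow_right₀ (by linarith [inv_pos.mpr hδ]) hn)
      calc |x| ^ k * ‖iteratedDeriv n (bumpSchwartz c hδ) x‖
          = |x| ^ k * (δ⁻¹ ^ n * |iteratedDeriv n unitBump (δ⁻¹ * x + -(δ⁻¹ * c))|) := by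
            rw [coe_bumpSchwartz, iteratedDeriv_scaledBump, Real.norm_eq_abs, abs_mul,
              abs_of_pos (pow_pos (inv_pos.mpr hδ) n)]
        _ ≤ (1 + |c| + 2 * δ) ^ p * ((1 + δ⁻¹) ^ p * B) := by
            gcongr; exact hB n hn _
        _ = M := by simp only [M, mul_pow]; ring
    · rw [coe_bumpSchwartz, iteratedDeriv_eq_zero_of_notMem_tsupport hx, norm_zero, mul_zero]
      positivity
  calc schwartzNorm p (bumpSchwartz c hδ)
      ≤ ∑ _k ∈ range (p + 1), ∑ _n ∈ range (p + 1), M :=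
        sum_le_sum fun k hk => sum_le_sum fun n hn =>
          hseminorm (Nat.lt_succ_iff.mp (mem_range.mp hk)) (Nat.lt_succ_iff.mp (mem_range.mp hn))
    _ = (p + 1) ^ 2 * B * ((1 + |c| + 2 * δ) * (1 + δ⁻¹)) ^ p := by
        simp only [sum_const, card_range, nsmul_eq_mul, M]; push_cast; ring

theorem integral_mul_bumpSchwartz_of_eqOn {L : ℝ → ℝ} {v a b c δ : ℝ} (hδ : 0 < δ)
    (ha : 0 ≤ a) (hab : closedBall c (2 * δ) ⊆ Ioo a b) (hL : EqOn L (fun _ => v) (Ioo a b)) :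
    ∫ t in Ici 0, L t * bumpSchwartz c hδ t = v * ∫ t, scaledBump c hδ t := by
  have hsupp {t : ℝ} (ht : t ∉ Ioo a b) : scaledBump c hδ t = 0 :=
    (scaledBump c hδ).zero_of_le_dist (not_lt.mp fun h => ht (hab (h.le : dist t c ≤ 2 * δ)))
  rw [← integral_const_mul, setIntegral_eq_integral_of_forall_compl_eq_zero]
  · congr 1 with t
    by_cases ht : t ∈ Ioo a b
    · rw [hL ht, coe_bumpSchwartz]
    · rw [coe_bumpSchwartz, hsupp ht, mul_zero, mul_zero]
  · intro t ht
    rw [coe_bumpSchwartz, hsupp fun h => ht (ha.trans h.1.le), mul_zero]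

theorem exists_abs_mul_le_of_eqOn_Ioo {L : ℝ → ℝ} {p : ℕ} {C : ℝ}
    (hC : ∀ φ : 𝓢(ℝ, ℝ), |∫ t in Ici 0, L t * φ t| ≤ C * schwartzNorm p φ) :
    ∃ K, ∀ a b v : ℝ, 0 ≤ a → a < b → EqOn L (fun _ => v) (Ioo a b) →
      |v| * (b - a) ≤ K * ((1 + b) * (1 + (b - a)⁻¹)) ^ p := by
  obtain ⟨K, hK0, hK⟩ := exists_schwartzNorm_bumpSchwartz_le p
  refine ⟨4 * |C| * K * 8 ^ p, fun a b v ha hab hL => ?_⟩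
  have hδ : 0 < (b - a) / 8 := by linarith
  have hball : closedBall ((a + b) / 2) (2 * ((b - a) / 8)) ⊆ Ioo a b := fun t ht => by
    rw [mem_closedBall, Real.dist_eq, abs_le] at ht
    constructor <;> linarith [ht.1, ht.2]
  set X := (1 + b) * (1 + (b - a)⁻¹)
  have hnorm : schwartzNorm p (bumpSchwartz ((a + b) / 2) hδ) ≤ K * (8 * X) ^ p := by
    refine (hK _ _ hδ).trans
      (mul_le_mul_of_nonneg_left (pow_le_pow_left₀ (by positivity) ?_ p) hK0)
    have hinv : ((b - a) / 8)⁻¹ = 8 * (b - a)⁻¹ := by rw [inv_div, div_eq_mul_inv]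
    have : 0 < (b - a)⁻¹ := inv_pos.mpr (by linarith)
    rw [abs_of_nonneg (by linarith), hinv]
    nlinarith
  have hmass : (b - a) / 4 ≤ ∫ t, scaledBump ((a + b) / 2) hδ t := by
    refine le_of_eq_of_le ?_ ((scaledBump _ hδ).measure_closedBall_le_integral volume)
    simp only [scaledBump]
    rw [Real.volume_real_closedBall hδ.le]; ring
  calc |v| * (b - a) = 4 * (|v| * ((b - a) / 4)) := by ring
    _ ≤ 4 * |∫ t in Ici 0, L t * bumpSchwartz ((a + b) / 2) hδ t| := by
        rw [integral_mul_bumpSchwartz_of_eqOn hδ ha hball hL, abs_mul,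
          abs_of_nonneg ((by positivity : (0 : ℝ) ≤ (b - a) / 4).trans hmass)]
        gcongr
    _ ≤ 4 * (|C| * (K * (8 * X) ^ p)) := by
        gcongr
        exact (hC _).trans ((mul_le_mul_of_nonneg_right (le_abs_self C)
          (schwartzNorm_nonneg p _)).trans (by gcongr))
    _ = 4 * |C| * K * 8 ^ p * X ^ p := by rw [mul_pow]; ring

variable {Ω : Type*} {Y T : ℕ → Ω → ℝ} {ω : Ω}

theorem cppPath_eq_of_mem_Ico (hT : ∀ k, 0 ≤ T k ω) {n : ℕ} {t : ℝ}
    (ht : t ∈ Ico (∑ j ∈ range n, T j ω) (∑ j ∈ range (n + 1), T j ω)) :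
    cppPath Y T t ω = ∑ i ∈ range n, Y i ω := by
  have hmono := (sum_mono_set_of_nonneg (f := fun j => T j ω) hT).comp range_mono
  have hset : {k : ℕ | ∑ j ∈ range (k + 1), T j ω ≤ t} = ↑(range n) := by
    ext k
    simp only [Set.mem_ofPred_eq, coe_range, Set.mem_Iio]
    constructor
    · intro hk
      by_contra! hnk
      exact (hmono (Nat.succ_le_succ hnk)).not_gt (hk.trans_lt ht.2)
    · intro hk
      exact (hmono hk).trans ht.1
  rw [cppPath, hset, ncard_coe_finset, card_range]

variable [MeasurableSpace Ω]

theorem exists_abs_sum_range_mul_le (hpos : ∀ k, 0 < T k ω)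
    (htemp : PathTempered (cppPath Y T) ω) :
    ∃ K p, ∀ n, |∑ i ∈ range n, Y i ω| * T n ω ≤
      K * ((1 + ∑ j ∈ range (n + 1), T j ω) * (1 + (T n ω)⁻¹)) ^ p := by
  obtain ⟨p, C, hC⟩ := htemp
  obtain ⟨K, hK⟩ := exists_abs_mul_le_of_eqOn_Ioo hC
  refine ⟨K, p, fun n => ?_⟩
  have := hK _ _ (∑ i ∈ range n, Y i ω) (sum_nonneg fun k _ => (hpos k).le)
    (by rw [sum_range_succ]; linarith [hpos n])
    fun t ht => cppPath_eq_of_mem_Ico (fun k => (hpos k).le) ⟨ht.1.le, ht.2⟩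
  rwa [sum_range_succ_sub_sum] at this

theorem exists_abs_sum_range_le_pow {M : ℝ} (hpos : ∀ k, 0 < T k ω)
    (hgap : ∀ᶠ n : ℕ in atTop, (T n ω)⁻¹ ≤ ((n : ℝ) + 1) ^ 2)
    (hup : ∀ᶠ n : ℕ in atTop, ∑ j ∈ range n, T j ω ≤ M * n)
    (htemp : PathTempered (cppPath Y T) ω) :
    ∃ D k, ∀ n, |∑ i ∈ range n, Y i ω| ≤ D * ((n : ℝ) + 1) ^ k := by
  obtain ⟨K, p, hjump⟩ := exists_abs_sum_range_mul_le hpos htemp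
  have hbigO : (fun n => ∑ i ∈ range n, Y i ω) =O[atTop]
      fun n => ((n : ℝ) + 1) ^ (3 * p + 2) := by
    refine IsBigO.of_bound (|K| * (2 * (1 + |M|)) ^ p) ?_
    filter_upwards [hgap, (tendsto_add_atTop_nat 1).eventually hup] with n hgap hup
    have hn : (1 : ℝ) ≤ n + 1 := by linarith [n.cast_nonneg (α := ℝ)]
    have hT := hpos n
    have h1 : 1 + ∑ j ∈ range (n + 1), T j ω ≤ (1 + |M|) * (n + 1) := by
      push_cast at hup; nlinarith [le_abs_self M, abs_nonneg M]
    have h2 : 1 + (T n ω)⁻¹ ≤ 2 * (n + 1) ^ 2 := by nlinarith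
    have hprod : 0 ≤ (1 + ∑ j ∈ range (n + 1), T j ω) * (1 + (T n ω)⁻¹) := by
      have : 0 ≤ ∑ j ∈ range (n + 1), T j ω := sum_nonneg fun k _ => (hpos k).le
      positivity
    rw [Real.norm_eq_abs, Real.norm_of_nonneg (by positivity)]
    calc |∑ i ∈ range n, Y i ω|
        = |∑ i ∈ range n, Y i ω| * T n ω * (T n ω)⁻¹ := by field_simp
      _ ≤ K * ((1 + ∑ j ∈ range (n + 1), T j ω) * (1 + (T n ω)⁻¹)) ^ p * (T n ω)⁻¹ :=
          mul_le_mul_of_nonneg_right (hjump n) (inv_pos.mpr hT).le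
      _ ≤ |K| * ((1 + |M|) * (n + 1) * (2 * (n + 1) ^ 2)) ^ p * (n + 1) ^ 2 := by
          gcongr ?_ * ?_ * ?_
          · exact le_abs_self K
          · exact pow_le_pow_left₀ hprod (mul_le_mul h1 h2 (by positivity) (by positivity)) p
      _ = |K| * (2 * (1 + |M|)) ^ p * ((n : ℝ) + 1) ^ (3 * p + 2) := by
          rw [show (1 + |M|) * ((n : ℝ) + 1) * (2 * (n + 1) ^ 2) =
              2 * (1 + |M|) * (n + 1) ^ 3 by ring, mul_pow, ← pow_mul, pow_add]
          ring
  obtain ⟨D, hD⟩ := (isBigO_nat_atTop_iff fun n h => absurd h (by positivity)).mp hbigO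
  refine ⟨D, 3 * p + 2, fun n => ?_⟩
  simpa [Real.norm_of_nonneg (by positivity : (0 : ℝ) ≤ n + 1)] using hD n

theorem slowlyGrowing_cppPath {m : ℝ} (hpos : ∀ k, 0 < T k ω)
    (hgap : ∀ᶠ n : ℕ in atTop, (T n ω)⁻¹ ≤ ((n : ℝ) + 1) ^ 2) (hm : 0 < m)
    (hlln : Tendsto (fun n : ℕ => (∑ i ∈ range n, T i ω) / n) atTop (𝓝 m))
    (htemp : PathTempered (cppPath Y T) ω) : SlowlyGrowing fun t => cppPath Y T t ω := by
  obtain ⟨D, k, hD⟩ := exists_abs_sum_range_le_pow hpos hgap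
    (eventually_le_mul_of_tendsto_div hlln (lt_two_mul_self hm)) htemp
  have hlow := eventually_mul_le_of_tendsto_div hlln (half_lt_self hm)
  obtain ⟨a, ha⟩ := exists_add_one_le_mul_of_eventually_mul_le (half_pos hm) hlow
  have hS : Tendsto (fun n => ∑ i ∈ range n, T i ω) atTop atTop :=
    tendsto_atTop_mono' _ hlow <|
      (tendsto_natCast_atTop_atTop (R := ℝ)).const_mul_atTop (half_pos hm)
  refine slowlyGrowing_of_exists_eq (a := a) hD fun t ht => ?_
  obtain ⟨n, hn⟩ := exists_mem_Ico_of_tendsto_atTop hS (by simpa using ht)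
  exact ⟨n, cppPath_eq_of_mem_Ico (fun k => (hpos k).le) hn, ha n t ht hn.1⟩

end CompoundPoisson

namespace IsCompoundPoisson

variable {Ω : Type*} [MeasurableSpace Ω] {P : Measure Ω} {lam : ℝ} {Y T : ℕ → Ω → ℝ}
  (hX : IsCompoundPoisson P lam Y T)
include hX

theorem ae_pos : ∀ᵐ ω ∂P, ∀ k, 0 < T k ω := by
  refine ae_all_iff.mpr fun k => ae_iff.mpr ?_
  simp only [not_lt]
  rw [hX.expT k 0]
  simp

theorem measure_setOf_le_le (i : ℕ) (x : ℝ) :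
    P {ω | T i ω ≤ x} ≤ ENNReal.ofReal (lam * x) := by
  rw [hX.expT]
  exact ENNReal.ofReal_le_ofReal (by linarith [Real.add_one_le_exp (-(lam * x))])

theorem ae_eventually_lt {ε : ℕ → ℝ} (hε0 : ∀ n, 0 ≤ ε n) (hε : Summable ε) :
    ∀ᵐ ω ∂P, ∀ᶠ n in atTop, ε n < T n ω := by
  have hsum : ∑' n, P {ω | T n ω ≤ ε n} ≠ ∞ := by
    refine ne_top_of_le_ne_top ?_
      (ENNReal.tsum_le_tsum fun n => hX.measure_setOf_le_le n (ε n))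
    rw [← ENNReal.ofReal_tsum_of_nonneg (fun n => mul_nonneg hX.lam_pos.le (hε0 n))
      (hε.mul_left lam)]
    exact ENNReal.ofReal_ne_top
  filter_upwards [ae_eventually_notMem hsum] with ω hω
  simpa using hω

theorem ae_eventually_inv_le_sq :
    ∀ᵐ ω ∂P, ∀ᶠ n : ℕ in atTop, (T n ω)⁻¹ ≤ ((n : ℝ) + 1) ^ 2 := by
  have hsum : Summable fun n : ℕ => 1 / ((n : ℝ) + 1) ^ 2 := by
    simpa using (summable_nat_add_iff 1).mpr (Real.summable_one_div_nat_pow.mpr one_lt_two)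
  have hnonneg (n : ℕ) : 0 ≤ 1 / ((n : ℝ) + 1) ^ 2 := by positivity
  filter_upwards [hX.ae_eventually_lt hnonneg hsum, hX.ae_pos] with ω hω hpos
  filter_upwards [hω] with n hn
  rw [← one_div]
  exact ((one_div_lt (hpos n) (by positivity)).mpr hn).le

variable [IsProbabilityMeasure P]

theorem identDistrib (i : ℕ) : IdentDistrib (T i) (T 0) P P where
  aemeasurable_fst := (hX.measurableT i).aemeasurable
  aemeasurable_snd := (hX.measurableT 0).aemeasurable
  map_eq := by
    refine Measure.ext_of_Iic _ _ fun x => ?_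
    rw [Measure.map_apply (hX.measurableT i) measurableSet_Iic,
      Measure.map_apply (hX.measurableT 0) measurableSet_Iic]
    exact (hX.expT i x).trans (hX.expT 0 x).symm

theorem measure_setOf_lt (i : ℕ) {x : ℝ} (hx : 0 ≤ x) :
    P {ω | x < T i ω} = ENNReal.ofReal (Real.exp (-(lam * x))) := by
  have hcompl : {ω | x < T i ω} = {ω | T i ω ≤ x}ᶜ := by ext; simp
  have hexp : Real.exp (-(lam * x)) ≤ 1 :=
    Real.exp_le_one_iff.mpr (by nlinarith [hX.lam_pos])
  rw [hcompl, measure_compl (measurableSet_le (hX.measurableT i) measurable_const)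
      (measure_ne_top _ _), hX.expT i x, measure_univ, ← ENNReal.ofReal_one,
    ← ENNReal.ofReal_sub _ (sub_nonneg.mpr hexp), sub_sub_cancel]

theorem integrable (i : ℕ) : Integrable (T i) P := by
  have hnn : 0 ≤ᵐ[P] T i := hX.ae_pos.mono fun ω h => (h i).le
  refine ⟨(hX.measurableT i).aestronglyMeasurable, ?_⟩
  rw [hasFiniteIntegral_iff_ofReal hnn,
    lintegral_eq_lintegral_meas_lt P hnn (hX.measurableT i).aemeasurable,
    setLIntegral_congr_fun measurableSet_Ioi fun x hx => hX.measure_setOf_lt i (le_of_lt hx)]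
  simp_rw [← neg_mul]
  exact (exp_neg_integrableOn_Ioi 0 hX.lam_pos).lintegral_lt_top

theorem integral_pos : 0 < P[T 0] := by
  have hsupp : ∀ᵐ ω ∂P, ω ∈ Function.support (T 0) := hX.ae_pos.mono fun ω h => (h 0).ne'
  rw [integral_pos_iff_support_of_nonneg_ae (hX.ae_pos.mono fun ω h => (h 0).le)
    (hX.integrable 0), measure_eq_one_of_ae_mem hsupp]
  exact one_pos

theorem ae_tendsto_average :
    ∀ᵐ ω ∂P, Tendsto (fun n : ℕ => (∑ i ∈ range n, T i ω) / n) atTop (𝓝 P[T 0]) :=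
  strong_law_ae_real T (hX.integrable 0)
    (fun _ _ hij => hX.indep.indepFun (Sum.inr_injective.ne hij)) hX.identDistrib

end IsCompoundPoisson

/-- Proposition 2.3: there is an event `A` of probability one such that on `Ω_X ∩ A` the
sample path of a compound Poisson process is slowly growing. -/
theorem compoundPoisson_tempered_implies_slowlyGrowing
    {Ω : Type*} [MeasurableSpace Ω] (P : Measure Ω) [IsProbabilityMeasure P]
    (lam : ℝ) (Y T : ℕ → Ω → ℝ) (hX : IsCompoundPoisson P lam Y T) :
    ∃ A : Set Ω, P A = 1 ∧ ∀ ω ∈ A, PathTempered (cppPath Y T) ω →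
      SlowlyGrowing fun t => cppPath Y T t ω := by
  set A := {ω | (∀ k, 0 < T k ω) ∧ (∀ᶠ n : ℕ in atTop, (T n ω)⁻¹ ≤ ((n : ℝ) + 1) ^ 2) ∧
    Tendsto (fun n : ℕ => (∑ i ∈ range n, T i ω) / n) atTop (𝓝 P[T 0])}
  have hA : ∀ᵐ ω ∂P, ω ∈ A := by
    filter_upwards [hX.ae_pos, hX.ae_eventually_inv_le_sq, hX.ae_tendsto_average]
      with ω hpos hgap hlln using ⟨hpos, hgap, hlln⟩
  refine ⟨A, measure_eq_one_of_ae_mem hA, ?_⟩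
  rintro ω ⟨hpos, hgap, hlln⟩ htemp
  exact CompoundPoisson.slowlyGrowing_cppPath hpos hgap hX.integral_pos hlln htemp
end
end

section
/- Let X be a compound Poisson process with jump heights (Y_i)_{i≥1}. Suppose there is a real number p > 0 such that E(|Y_1|^p) < ∞. Then there exists α > 0 such that almost surely limsup_{t→+∞} |X_t|/(1+t^α) < +∞. -/
open MeasureTheory ProbabilityTheory Filter

noncomputable section

/-!
By the strong law of large numbers the jump times `S_n = T_0 + ⋯ + T_{n-1}` satisfy
`S_n / n → 1/λ`, so the number of jumps before `t` is `N_t = O(t)`. Since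
`∑ⱼ P(|Y_j|^p > j) ≤ E|Y_0|^p + 1 < ∞`, Borel–Cantelli gives `|Y_j| ≤ j^{1/p}` for all large `j`
almost surely, hence `|X_t| ≤ ∑_{i < N_t} |Y_i| = O(N_t^{1 + 1/p}) = O(t^{1 + 1/p})`, and
`α = 1 + 1/p` works.
-/

open Asymptotics
open scoped Topology

section Deterministic

variable {s y : ℕ → ℝ} {r : ℝ}

lemma ncard_setOf_le_le_add_div {c : ℝ} (hc : 0 < c) {n₀ : ℕ} (hs : ∀ n ≥ n₀, c * n ≤ s n) {t : ℝ}
    (ht : 0 ≤ t) : (Set.ncard {n : ℕ | s (n + 1) ≤ t} : ℝ) ≤ n₀ + t / c := by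
  have hsub : {n : ℕ | s (n + 1) ≤ t} ⊆ Finset.range (n₀ + ⌊t / c⌋₊) := by
    intro n hn
    simp only [Finset.coe_range, Set.mem_Iio]
    by_contra! hlarge
    have hct : c * (n + 1 : ℕ) ≤ t := (hs (n + 1) (by omega)).trans hn
    have : n + 1 ≤ ⌊t / c⌋₊ := Nat.le_floor ((le_div_iff₀' hc).2 hct)
    omega
  calc (Set.ncard {n : ℕ | s (n + 1) ≤ t} : ℝ) ≤ (n₀ + ⌊t / c⌋₊ : ℕ) := by
        exact_mod_cast (Set.ncard_le_ncard hsub (Finset.finite_toSet _)).trans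
          (by rw [Set.ncard_coe_finset, Finset.card_range])
    _ ≤ n₀ + t / c := by push_cast; gcongr; exact Nat.floor_le (by positivity)

lemma isBigO_ncard_setOf_le {m : ℝ} (hm : 0 < m)
    (hs : Tendsto (fun n : ℕ => (n : ℝ)⁻¹ * s n) atTop (𝓝 m)) :
    (fun t : ℝ => (Set.ncard {n : ℕ | s (n + 1) ≤ t} : ℝ)) =O[atTop] fun t => t := by
  obtain ⟨n₀, hn₀⟩ := eventually_atTop.1 <|
    (hs.eventually (eventually_ge_nhds (half_lt_self hm))).and (eventually_ge_atTop 1)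
  have hlin : ∀ n ≥ n₀, m / 2 * n ≤ s n := fun n hn => by
    obtain ⟨hmean, hn1⟩ := hn₀ n hn
    have hnpos : (0 : ℝ) < n := by exact_mod_cast hn1
    rwa [inv_mul_eq_div, le_div_iff₀ hnpos] at hmean
  refine IsBigO.of_bound (n₀ + 2 / m) ?_
  filter_upwards [eventually_ge_atTop 1] with t ht
  rw [Real.norm_natCast, Real.norm_of_nonneg (by linarith)]
  calc (Set.ncard {n : ℕ | s (n + 1) ≤ t} : ℝ) ≤ n₀ + t / (m / 2) :=
        ncard_setOf_le_le_add_div (half_pos hm) hlin (by linarith)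
    _ = n₀ + 2 / m * t := by ring
    _ ≤ (n₀ + 2 / m) * t := by nlinarith [(Nat.cast_nonneg n₀ : (0 : ℝ) ≤ n₀)]

lemma exists_abs_le_mul_add_one_rpow (hr : 0 ≤ r) (hy : ∀ᶠ i in atTop, |y i| ≤ (i : ℝ) ^ r) :
    ∃ K, ∀ i, |y i| ≤ K * ((i : ℝ) + 1) ^ r := by
  have hpos : ∀ i : ℕ, 0 < ((i : ℝ) + 1) ^ r := fun i => by positivity
  have hO : y =O[cofinite] fun i => ((i : ℝ) + 1) ^ r := by
    rw [Nat.cofinite_eq_atTop]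
    refine IsBigO.of_bound' ?_
    filter_upwards [hy] with i hi
    rw [Real.norm_eq_abs, Real.norm_of_nonneg (hpos i).le]
    exact hi.trans (by gcongr; linarith)
  obtain ⟨K, hK⟩ := (isBigO_cofinite_iff fun i hi => absurd hi (hpos i).ne').1 hO
  exact ⟨K, fun i => by simpa [Real.norm_of_nonneg (hpos i).le] using hK i⟩

lemma abs_sum_range_le_mul_rpow {K : ℝ} (hr : 0 ≤ r) (hK : ∀ i, |y i| ≤ K * ((i : ℝ) + 1) ^ r)
    (M : ℕ) : |∑ i ∈ Finset.range M, y i| ≤ K * (M : ℝ) ^ (r + 1) := by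
  have hK0 : 0 ≤ K := by simpa using (abs_nonneg _).trans (hK 0)
  calc |∑ i ∈ Finset.range M, y i| ≤ ∑ i ∈ Finset.range M, |y i| := Finset.abs_sum_le_sum_abs _ _
    _ ≤ ∑ _i ∈ Finset.range M, K * (M : ℝ) ^ r := Finset.sum_le_sum fun i hi => (hK i).trans <| by
        have : (i : ℝ) + 1 ≤ M := by exact_mod_cast Finset.mem_range.1 hi
        gcongr
    _ = K * (M : ℝ) ^ (r + 1) := by
        rw [Finset.sum_const, Finset.card_range, nsmul_eq_mul,
          Real.rpow_add_one' (Nat.cast_nonneg M) (by linarith)]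
        ring

lemma isBigO_sum_range_ncard_setOf_le (hr : 0 ≤ r) {m : ℝ} (hm : 0 < m)
    (hs : Tendsto (fun n : ℕ => (n : ℝ)⁻¹ * s n) atTop (𝓝 m))
    (hy : ∀ᶠ i in atTop, |y i| ≤ (i : ℝ) ^ r) :
    (fun t : ℝ => ∑ i ∈ Finset.range (Set.ncard {n : ℕ | s (n + 1) ≤ t}), y i)
      =O[atTop] fun t => t ^ (r + 1) := by
  obtain ⟨K, hK⟩ := exists_abs_le_mul_add_one_rpow hr hy
  refine (IsBigO.of_bound K (Eventually.of_forall fun t => ?_)).trans <|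
    (isBigO_ncard_setOf_le hm hs).rpow (by linarith) (eventually_ge_atTop 0)
  rw [Real.norm_eq_abs, Real.norm_of_nonneg (by positivity)]
  exact abs_sum_range_le_mul_rpow hr hK _

end Deterministic

lemma limsup_ofReal_abs_div_one_add_rpow_lt_top {f : ℝ → ℝ} {α : ℝ}
    (hf : f =O[atTop] fun t => t ^ α) :
    limsup (fun t => ENNReal.ofReal (|f t| / (1 + t ^ α))) atTop < ⊤ := by
  obtain ⟨c, hc0, hc⟩ := isBigO_iff'.1 hf
  refine (limsup_le_of_le (by isBoundedDefault) ?_).trans_lt (ENNReal.ofReal_lt_top (r := c))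
  filter_upwards [hc, eventually_ge_atTop 0] with t ht ht0
  have hα : 0 ≤ t ^ α := Real.rpow_nonneg ht0 α
  rw [Real.norm_eq_abs, Real.norm_of_nonneg hα] at ht
  gcongr
  rw [div_le_iff₀ (by positivity)]
  nlinarith

section Probability

variable {Ω : Type*} [MeasurableSpace Ω] {P : Measure Ω} [IsProbabilityMeasure P]

lemma integrable_and_integral_eq_inv_of_exp_cdf {T : Ω → ℝ} {lam : ℝ} (hlam : 0 < lam)
    (hT : Measurable T)
    (hcdf : ∀ x, P {ω | T ω ≤ x} = ENNReal.ofReal (1 - Real.exp (-(lam * x)))) :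
    Integrable T P ∧ ∫ ω, T ω ∂P = lam⁻¹ := by
  have hnn : 0 ≤ᵐ[P] T := by
    have hzero : P {ω | T ω ≤ 0} = 0 := by rw [hcdf]; simp
    exact ae_iff.2 (measure_mono_null (fun ω (h : ¬ 0 ≤ T ω) => (not_le.1 h).le) hzero)
  have htail : ∀ t ∈ Set.Ioi (0 : ℝ),
      P {ω | t < T ω} = ENNReal.ofReal (Real.exp (-lam * t)) := fun t ht => by
    have hexp : Real.exp (-lam * t) ≤ 1 :=
      Real.exp_le_one_iff.2 (by nlinarith [Set.mem_Ioi.1 ht])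
    have hcompl : {ω | t < T ω} = {ω | T ω ≤ t}ᶜ := by ext; simp
    rw [hcompl, prob_compl_eq_one_sub (measurableSet_le hT measurable_const), hcdf,
      ← ENNReal.ofReal_one, ← ENNReal.ofReal_sub _ (by rw [← neg_mul]; linarith)]
    ring_nf
  have hlint : ∫⁻ ω, ENNReal.ofReal (T ω) ∂P = ENNReal.ofReal lam⁻¹ :=
    calc ∫⁻ ω, ENNReal.ofReal (T ω) ∂P = ∫⁻ t in Set.Ioi 0, P {ω | t < T ω} :=
          lintegral_eq_lintegral_meas_lt P hnn hT.aemeasurable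
      _ = ∫⁻ t in Set.Ioi 0, ENNReal.ofReal (Real.exp (-lam * t)) :=
          setLIntegral_congr_fun measurableSet_Ioi htail
      _ = ENNReal.ofReal (∫ t in Set.Ioi 0, Real.exp (-lam * t)) :=
          (ofReal_integral_eq_lintegral_ofReal (exp_neg_integrableOn_Ioi 0 hlam)
            (ae_of_all _ fun _ => (Real.exp_pos _).le)).symm
      _ = ENNReal.ofReal lam⁻¹ := by
          rw [integral_exp_mul_Ioi (neg_lt_zero.2 hlam)]
          simp
  refine ⟨⟨hT.aestronglyMeasurable, (hasFiniteIntegral_iff_ofReal hnn).2 ?_⟩, ?_⟩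
  · rw [hlint]; exact ENNReal.ofReal_lt_top
  · rw [integral_eq_lintegral_of_nonneg_ae hnn hT.aestronglyMeasurable, hlint,
      ENNReal.toReal_ofReal (inv_nonneg.2 hlam.le)]

lemma ae_eventually_abs_le_rpow_inv {Y : ℕ → Ω → ℝ} (hY : ∀ i, Measurable (Y i))
    (hid : ∀ i, P.map (Y i) = P.map (Y 0)) {p : ℝ} (hp : 0 < p)
    (hmom : ∫⁻ ω, ENNReal.ofReal (|Y 0 ω| ^ p) ∂P < ⊤) :
    ∀ᵐ ω ∂P, ∀ᶠ i in atTop, |Y i ω| ≤ (i : ℝ) ^ p⁻¹ := by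
  have hg : Measurable fun x : ℝ => |x| ^ p :=
    (continuous_abs.rpow_const fun _ => Or.inr hp.le).measurable
  have hint : Integrable (fun ω => |Y 0 ω| ^ p) P :=
    ⟨(hg.comp (hY 0)).aestronglyMeasurable,
      (hasFiniteIntegral_iff_ofReal (ae_of_all _ fun ω => by positivity)).2 hmom⟩
  have hlaw : ∀ i : ℕ, P {ω | |Y i ω| ^ p ∈ Set.Ioi (i : ℝ)} =
      P {ω | |Y 0 ω| ^ p ∈ Set.Ioi (i : ℝ)} := fun i =>
    ((IdentDistrib.mk (hY i).aemeasurable (hY 0).aemeasurable (hid i)).comp hg).measure_mem_eq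
      measurableSet_Ioi
  have hsum : ∑' i : ℕ, P {ω | |Y i ω| ^ p ∈ Set.Ioi (i : ℝ)} ≠ ⊤ := by
    simp_rw [hlaw]
    exact (@tsum_prob_mem_Ioi_lt_top Ω ⟨P⟩ _ _ hint fun ω => by positivity).ne
  filter_upwards [ae_eventually_notMem hsum] with ω hω
  filter_upwards [hω] with i hi
  have hle : |Y i ω| ^ p ≤ i := not_lt.1 hi
  simpa [Real.rpow_rpow_inv (abs_nonneg _) hp.ne'] using
    Real.rpow_le_rpow (by positivity) hle (inv_nonneg.2 hp.le)

lemma IsCompoundPoisson.ae_tendsto_avg_interarrival {lam : ℝ} {Y T : ℕ → Ω → ℝ}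
    (hX : IsCompoundPoisson P lam Y T) :
    ∀ᵐ ω ∂P, Tendsto (fun n : ℕ => (n : ℝ)⁻¹ * ∑ j ∈ Finset.range n, T j ω) atTop (𝓝 lam⁻¹) := by
  obtain ⟨hint, hmean⟩ :=
    integrable_and_integral_eq_inv_of_exp_cdf hX.lam_pos (hX.measurableT 0) (hX.expT 0)
  have hindep : Pairwise fun i j => IndepFun (T i) (T j) P := fun i j hij =>
    hX.indep.indepFun (i := Sum.inr i) (j := Sum.inr j) (by simpa using hij)
  have hident : ∀ i, IdentDistrib (T i) (T 0) P P := fun i => by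
    refine ⟨(hX.measurableT i).aemeasurable, (hX.measurableT 0).aemeasurable, ?_⟩
    have := Measure.isProbabilityMeasure_map (μ := P) (hX.measurableT i).aemeasurable
    have := Measure.isProbabilityMeasure_map (μ := P) (hX.measurableT 0).aemeasurable
    refine Measure.ext_of_Iic _ _ fun x => ?_
    rw [Measure.map_apply (hX.measurableT i) measurableSet_Iic,
      Measure.map_apply (hX.measurableT 0) measurableSet_Iic]
    exact (hX.expT i x).trans (hX.expT 0 x).symm
  simpa [hmean] using strong_law_ae T hint hindep hident

end Probability

/-- Proposition 2.4(i): if the jump heights have a finite absolute moment of some positive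
order, then for some `α > 0`, a.s. `limsup_{t→∞} |X_t|/(1+t^α) < ∞`. -/
theorem compoundPoisson_moment_limsup_lt_top
    {Ω : Type*} [MeasurableSpace Ω] (P : Measure Ω) [IsProbabilityMeasure P]
    (lam : ℝ) (Y T : ℕ → Ω → ℝ) (hX : IsCompoundPoisson P lam Y T)
    (p : ℝ) (hp : 0 < p) (hmom : ∫⁻ ω, ENNReal.ofReal (|Y 0 ω| ^ p) ∂P < ⊤) :
    ∃ α : ℝ, 0 < α ∧ ∀ᵐ ω ∂P,
      Filter.limsup (fun t : ℝ =>
        ENNReal.ofReal (|cppPath Y T t ω| / (1 + t ^ α))) Filter.atTop < ⊤ := by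
  refine ⟨p⁻¹ + 1, by positivity, ?_⟩
  filter_upwards [hX.ae_tendsto_avg_interarrival,
    ae_eventually_abs_le_rpow_inv hX.measurableY hX.idY hp hmom] with ω hS hY
  exact limsup_ofReal_abs_div_one_add_rpow_lt_top <|
    isBigO_sum_range_ncard_setOf_le (s := fun n => ∑ j ∈ Finset.range n, T j ω)
      (inv_nonneg.2 hp.le) (inv_pos.2 hX.lam_pos) hS hY
end
end

section
/- Let X be a compound Poisson process with jump heights (Y_i)_{i≥1}. Suppose that E(|Y_1|^p) = +∞ for every p > 0. Then for every α > 0, almost surely limsup_{t→+∞} |X_t|/(1+t^α) = +∞. -/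
open MeasureTheory ProbabilityTheory Filter

noncomputable section

/-! With `q = 3α + 1`, the moment `E |Y_0|^(1/q)` is infinite, so `∑ P(|Y_n| > n^q) = ∞` and by the
second Borel–Cantelli lemma `|Y_n| > n^q` infinitely often. Borel–Cantelli also gives `T_n ≤ n`
eventually and `T_n > 1` infinitely often, so the jump times `S_n = T_0 + ⋯ + T_n` tend to infinity
and are eventually at most `n^3`. The path jumps by `Y_n` at `S_n`, hence `2 |X_t| ≥ n^q` at
`t = S_{n-1}` or `t = S_n`; there `1 + t^α ≤ 2 n^(3α)`, so `|X_t| / (1 + t^α) ≥ n / 4`. -/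

open Finset
open scoped ENNReal

theorem ENNReal.le_tsum_ite_natCast_lt (x : ℝ≥0∞) :
    x ≤ ∑' n : ℕ, if (n : ℝ≥0∞) < x then 1 else 0 := by
  induction x with
  | top => simp
  | coe r =>
    calc (r : ℝ≥0∞) ≤ ⌈r⌉₊ := by exact_mod_cast Nat.le_ceil r
      _ = ∑ n ∈ range ⌈r⌉₊, if (n : ℝ≥0∞) < r then 1 else 0 := by
        rw [sum_congr rfl fun n hn => if_pos ?_]
        · simp
        · exact_mod_cast Nat.lt_ceil.1 (mem_range.1 hn)
      _ ≤ _ := ENNReal.sum_le_tsum _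

theorem MeasureTheory.lintegral_le_tsum_measure_natCast_lt {Ω : Type*} [MeasurableSpace Ω]
    (μ : Measure Ω) {g : Ω → ℝ≥0∞} (hg : Measurable g) :
    ∫⁻ ω, g ω ∂μ ≤ ∑' n : ℕ, μ {ω | (n : ℝ≥0∞) < g ω} := by
  have hmeas (n : ℕ) : MeasurableSet {ω | (n : ℝ≥0∞) < g ω} :=
    measurableSet_lt measurable_const hg
  calc ∫⁻ ω, g ω ∂μ
      ≤ ∫⁻ ω, ∑' n : ℕ, {ω | (n : ℝ≥0∞) < g ω}.indicator 1 ω ∂μ := by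
        refine lintegral_mono fun ω => (ENNReal.le_tsum_ite_natCast_lt (g ω)).trans_eq ?_
        simp [Set.indicator_apply]
    _ = ∑' n : ℕ, μ {ω | (n : ℝ≥0∞) < g ω} := by
        rw [lintegral_tsum fun n => (measurable_one.indicator (hmeas n)).aemeasurable]
        simp_rw [lintegral_indicator_one (hmeas _)]

theorem MeasureTheory.tsum_measure_rpow_lt_abs_eq_top {Ω : Type*} [MeasurableSpace Ω]
    {μ : Measure Ω} {X : Ω → ℝ} (hX : Measurable X) {q : ℝ} (hq : 0 < q)
    (hmom : ∫⁻ ω, ENNReal.ofReal (|X ω| ^ q⁻¹) ∂μ = ⊤) :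
    ∑' n : ℕ, μ {ω | (n : ℝ) ^ q < |X ω|} = ⊤ := by
  have hset (n : ℕ) : {ω | (n : ℝ≥0∞) < ENNReal.ofReal (|X ω| ^ q⁻¹)} =
      {ω | (n : ℝ) ^ q < |X ω|} := by
    ext ω
    rw [Set.mem_ofPred_eq, Set.mem_ofPred_eq, ← ENNReal.ofReal_natCast,
      ENNReal.ofReal_lt_ofReal_iff_of_nonneg n.cast_nonneg,
      ← Real.rpow_lt_rpow_iff (by positivity) (by positivity) hq,
      ← Real.rpow_mul (abs_nonneg _), inv_mul_cancel₀ hq.ne', Real.rpow_one]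
  have hle := lintegral_le_tsum_measure_natCast_lt μ (hX.abs.pow_const q⁻¹).ennreal_ofReal
  simpa only [hmom, hset, top_le_iff] using hle

theorem ProbabilityTheory.iIndepFun.iIndepSet_preimage {Ω ι β : Type*} [MeasurableSpace Ω]
    [MeasurableSpace β] {μ : Measure Ω} {f : ι → Ω → β} (h : iIndepFun f μ)
    (hf : ∀ i, Measurable (f i)) {B : ι → Set β} (hB : ∀ i, MeasurableSet (B i)) :
    iIndepSet (fun i => f i ⁻¹' B i) μ :=
  ((iIndepFun_iff_iIndep _ _ _).1 h).iIndepSets'.iIndepSet_of_mem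
    (fun i => comap_measurable (f i) (hB i)) fun i => hf i (hB i)

theorem ProbabilityTheory.ae_frequently_mem_of_iIndepSet {Ω : Type*} [MeasurableSpace Ω]
    {μ : Measure Ω} {s : ℕ → Set Ω} (hsm : ∀ n, MeasurableSet (s n)) (hs : iIndepSet s μ)
    (hsum : ∑' n, μ (s n) = ∞) : ∀ᵐ ω ∂μ, ∃ᶠ n in atTop, ω ∈ s n := by
  have := hs.isProbabilityMeasure
  have hlimsup := measure_limsup_eq_one hsm hs hsum
  rw [← prob_compl_eq_zero_iff (MeasurableSet.measurableSet_limsup hsm),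
    measure_eq_zero_iff_ae_notMem] at hlimsup
  filter_upwards [hlimsup] with ω hω
  exact mem_limsup_iff_frequently_mem.1 (Set.not_notMem.1 hω)

section PartialSums

variable {a : ℕ → ℝ}

theorem tendsto_sum_range_atTop_of_frequently_one_lt (ha : ∀ n, 0 ≤ a n)
    (h : ∃ᶠ n in atTop, 1 < a n) : Tendsto (fun n => ∑ i ∈ range n, a i) atTop atTop := by
  refine (not_summable_iff_tendsto_nat_atTop_of_nonneg ha).1 fun hsum => ?_
  have hsmall := hsum.tendsto_atTop_zero.eventually (gt_mem_nhds one_pos)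
  exact (h.and_eventually hsmall).exists.elim fun n hn => hn.1.not_gt hn.2

theorem eventually_sum_range_succ_le_pow_three (ha : ∀ n, 0 ≤ a n)
    (h : ∀ᶠ n : ℕ in atTop, a n ≤ n) :
    ∀ᶠ n : ℕ in atTop, ∑ i ∈ range (n + 1), a i ≤ (n : ℝ) ^ 3 := by
  obtain ⟨N, hN⟩ := eventually_atTop.1 h
  set C := ∑ i ∈ range N, a i
  have hC : 0 ≤ C := sum_nonneg fun i _ => ha i
  have hbound (n i : ℕ) (hi : i ≤ n) : a i ≤ n + C := by
    rcases lt_or_ge i N with hiN | hiN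
    · have : a i ≤ C := single_le_sum (fun j _ => ha j) (mem_range.2 hiN)
      linarith [(n.cast_nonneg : (0 : ℝ) ≤ n)]
    · have : (i : ℝ) ≤ n := by exact_mod_cast hi
      linarith [hN i hiN]
  filter_upwards [eventually_ge_atTop (⌈C⌉₊ + 2)] with n hn
  have hCn : C + 2 ≤ n := by
    have := Nat.le_ceil C
    have : ((⌈C⌉₊ + 2 : ℕ) : ℝ) ≤ n := by exact_mod_cast hn
    push_cast at this
    linarith
  calc ∑ i ∈ range (n + 1), a i ≤ ∑ _i ∈ range (n + 1), ((n : ℝ) + C) :=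
        sum_le_sum fun i hi => hbound n i (Nat.lt_succ_iff.1 (mem_range.1 hi))
    _ = (n + 1) * (n + C) := by rw [sum_const, card_range, nsmul_eq_mul]; push_cast; ring
    _ ≤ (n + 1) * (2 * n - 2) := by gcongr; linarith
    _ ≤ (n : ℝ) ^ 3 := by
        nlinarith [mul_nonneg (sq_nonneg (n : ℝ)) (by linarith : (0 : ℝ) ≤ n - 2)]

theorem strictMono_sum_range_succ_of_pos (ha : ∀ n, 0 < a n) :
    StrictMono fun n => ∑ i ∈ range (n + 1), a i :=
  strictMono_nat_of_lt_succ fun n => by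
    rw [sum_range_succ _ (n + 1)]
    linarith [ha (n + 1)]

end PartialSums

theorem cppPath_sum_range_succ {Ω : Type*} {Y T : ℕ → Ω → ℝ} {ω : Ω} (hT : ∀ n, 0 < T n ω)
    (n : ℕ) :
    cppPath Y T (∑ j ∈ range (n + 1), T j ω) ω = ∑ i ∈ range (n + 1), Y i ω := by
  have hjumps : {m : ℕ | ∑ j ∈ range (m + 1), T j ω ≤ ∑ j ∈ range (n + 1), T j ω} =
      Set.Iic n := by
    ext m
    exact (strictMono_sum_range_succ_of_pos hT).le_iff_le
  rw [cppPath, hjumps, ← coe_Iic, Set.ncard_coe_finset, Nat.card_Iic]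

theorem le_abs_div_one_add_rpow {α n t x : ℝ} (hα : 0 ≤ α) (hn : 1 ≤ n) (ht0 : 0 ≤ t)
    (ht : t ≤ n ^ 3) (hx : n ^ (3 * α + 1) ≤ 2 * |x|) : n / 4 ≤ |x| / (1 + t ^ α) := by
  have hn0 : 0 < n := by linarith
  have htα : t ^ α ≤ n ^ (3 * α) := by
    calc t ^ α ≤ (n ^ 3) ^ α := Real.rpow_le_rpow ht0 ht hα
      _ = n ^ (3 * α) := by rw [← Real.rpow_natCast, ← Real.rpow_mul hn0.le]; norm_num
  have hone : 1 ≤ n ^ (3 * α) := Real.one_le_rpow hn (by positivity)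
  have hden : 0 < 1 + t ^ α := by positivity
  rw [le_div_iff₀ hden]
  calc n / 4 * (1 + t ^ α) ≤ n / 4 * (2 * n ^ (3 * α)) := by gcongr; linarith
    _ = n ^ (3 * α + 1) / 2 := by rw [Real.rpow_add_one hn0.ne']; ring
    _ ≤ |x| := by linarith

theorem limsup_abs_div_one_add_rpow_eq_top {f : ℝ → ℝ} {α : ℝ} (hα : 0 ≤ α)
    (h : ∀ M : ℝ, ∃ᶠ n : ℕ in atTop,
      ∃ t, M ≤ t ∧ t ≤ (n : ℝ) ^ 3 ∧ (n : ℝ) ^ (3 * α + 1) ≤ 2 * |f t|) :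
    limsup (fun t => ENNReal.ofReal (|f t| / (1 + t ^ α))) atTop = ⊤ := by
  refine ENNReal.eq_top_of_forall_nnreal_le fun r => le_limsup_of_frequently_le' ?_
  refine frequently_atTop.2 fun M => ?_
  have hlarge : ∀ᶠ n : ℕ in atTop, 1 ≤ (n : ℝ) ∧ 4 * (r : ℝ) ≤ n :=
    (tendsto_natCast_atTop_atTop.eventually_ge_atTop 1).and
      (tendsto_natCast_atTop_atTop.eventually_ge_atTop _)
  obtain ⟨n, ⟨t, hMt, htn, hft⟩, hn1, hrn⟩ := ((h (max M 0)).and_eventually hlarge).exists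
  refine ⟨t, le_of_max_le_left hMt, ?_⟩
  rw [← ENNReal.ofReal_coe_nnreal]
  refine ENNReal.ofReal_le_ofReal ?_
  calc (r : ℝ) ≤ n / 4 := by linarith
    _ ≤ _ := le_abs_div_one_add_rpow hα hn1 (le_of_max_le_right hMt) htn hft

theorem frequently_exists_le_abs_cppPath {Ω : Type*} {Y T : ℕ → Ω → ℝ} {ω : Ω} {q : ℝ}
    (hT : ∀ n, 0 < T n ω) (hT_one : ∃ᶠ n in atTop, 1 < T n ω)
    (hT_le : ∀ᶠ n : ℕ in atTop, T n ω ≤ n) (hY : ∃ᶠ n : ℕ in atTop, (n : ℝ) ^ q < |Y n ω|)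
    (M : ℝ) :
    ∃ᶠ n : ℕ in atTop, ∃ t, M ≤ t ∧ t ≤ (n : ℝ) ^ 3 ∧ (n : ℝ) ^ q ≤ 2 * |cppPath Y T t ω| := by
  set S : ℕ → ℝ := fun n => ∑ j ∈ range (n + 1), T j ω
  have hS_tendsto : Tendsto S atTop atTop :=
    (tendsto_sum_range_atTop_of_frequently_one_lt (fun n => (hT n).le) hT_one).comp
      (tendsto_add_atTop_nat 1)
  have hS_le := eventually_sum_range_succ_le_pow_three (fun n => (hT n).le) hT_le
  have hlarge : ∀ᶠ n : ℕ in atTop, 1 ≤ n ∧ M ≤ S (n - 1) ∧ S n ≤ (n : ℝ) ^ 3 :=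
    (eventually_ge_atTop 1).and
      (((hS_tendsto.comp (tendsto_sub_atTop_nat 1)).eventually_ge_atTop M).and hS_le)
  refine (hY.and_eventually hlarge).mono ?_
  rintro n ⟨hYn, hn1, hMS, hSn⟩
  obtain ⟨m, rfl⟩ := Nat.exists_eq_add_one.2 hn1
  rw [Nat.add_sub_cancel] at hMS
  have hSm : S m ≤ S (m + 1) := (strictMono_sum_range_succ_of_pos hT).monotone m.le_succ
  have hjump : cppPath Y T (S (m + 1)) ω - cppPath Y T (S m) ω = Y (m + 1) ω := by
    rw [cppPath_sum_range_succ hT, cppPath_sum_range_succ hT, sum_range_succ _ (m + 1),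
      add_sub_cancel_left]
  have htriangle := hjump ▸ abs_sub (cppPath Y T (S (m + 1)) ω) (cppPath Y T (S m) ω)
  rcases le_total |cppPath Y T (S m) ω| |cppPath Y T (S (m + 1)) ω| with h | h
  · exact ⟨S (m + 1), hMS.trans hSm, hSn, by linarith⟩
  · exact ⟨S m, hMS, hSm.trans hSn, by linarith⟩

namespace IsCompoundPoisson

variable {Ω : Type*} [MeasurableSpace Ω] {P : Measure Ω} {lam : ℝ} {Y T : ℕ → Ω → ℝ}

theorem iIndepFun_Y (hX : IsCompoundPoisson P lam Y T) : iIndepFun Y P :=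
  (hX.indep.precomp Sum.inl_injective :)

theorem iIndepFun_T (hX : IsCompoundPoisson P lam Y T) : iIndepFun T P :=
  (hX.indep.precomp Sum.inr_injective :)

theorem measure_lt_T (hX : IsCompoundPoisson P lam Y T) (i : ℕ) {x : ℝ} (hx : 0 ≤ x) :
    P {ω | x < T i ω} = ENNReal.ofReal (Real.exp (-(lam * x))) := by
  have := hX.indep.isProbabilityMeasure
  have hexp : Real.exp (-(lam * x)) ≤ 1 :=
    Real.exp_le_one_iff.2 (neg_nonpos.2 (mul_nonneg hX.lam_pos.le hx))
  have hcompl : {ω | x < T i ω} = {ω | T i ω ≤ x}ᶜ := by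
    ext ω
    simp
  rw [hcompl, prob_compl_eq_one_sub (measurableSet_le (hX.measurableT i) measurable_const),
    hX.expT, ← ENNReal.ofReal_one,
    ← ENNReal.ofReal_sub _ (by linarith [Real.exp_pos (-(lam * x))])]
  ring_nf

theorem ae_forall_T_pos (hX : IsCompoundPoisson P lam Y T) : ∀ᵐ ω ∂P, ∀ n, 0 < T n ω :=
  ae_all_iff.2 fun n => by simp [ae_iff, hX.expT]

theorem ae_frequently_one_lt_T (hX : IsCompoundPoisson P lam Y T) :
    ∀ᵐ ω ∂P, ∃ᶠ n in atTop, 1 < T n ω := by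
  refine ae_frequently_mem_of_iIndepSet (s := fun n => {ω | 1 < T n ω})
    (fun n => hX.measurableT n measurableSet_Ioi)
    (hX.iIndepFun_T.iIndepSet_preimage hX.measurableT fun _ => measurableSet_Ioi) ?_
  rw [tsum_congr fun n => hX.measure_lt_T n zero_le_one]
  exact ENNReal.tsum_const_eq_top_of_ne_zero (ENNReal.ofReal_pos.2 (Real.exp_pos _)).ne'

theorem ae_eventually_T_le (hX : IsCompoundPoisson P lam Y T) :
    ∀ᵐ ω ∂P, ∀ᶠ n : ℕ in atTop, T n ω ≤ n := by
  have hsummable : Summable fun n : ℕ => Real.exp (-(lam * n)) := by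
    simpa [← Real.exp_nat_mul, mul_comm] using
      summable_geometric_of_lt_one (Real.exp_pos (-lam)).le
        (Real.exp_lt_one_iff.2 (neg_neg_iff_pos.2 hX.lam_pos))
  have hsum : ∑' n : ℕ, P {ω | (n : ℝ) < T n ω} ≠ ∞ := by
    rw [tsum_congr fun n => hX.measure_lt_T n n.cast_nonneg,
      ← ENNReal.ofReal_tsum_of_nonneg (fun n => (Real.exp_pos _).le) hsummable]
    exact ENNReal.ofReal_ne_top
  filter_upwards [ae_eventually_notMem hsum] with ω hω
  simpa using hω

theorem ae_frequently_rpow_lt_abs_Y (hX : IsCompoundPoisson P lam Y T) {q : ℝ} (hq : 0 < q)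
    (hmom : ∫⁻ ω, ENNReal.ofReal (|Y 0 ω| ^ q⁻¹) ∂P = ⊤) :
    ∀ᵐ ω ∂P, ∃ᶠ n : ℕ in atTop, (n : ℝ) ^ q < |Y n ω| := by
  have hB (n : ℕ) : MeasurableSet {y : ℝ | (n : ℝ) ^ q < |y|} :=
    measurableSet_lt measurable_const measurable_abs
  refine ae_frequently_mem_of_iIndepSet (s := fun n => Y n ⁻¹' {y | (n : ℝ) ^ q < |y|})
    (fun n => hX.measurableY n (hB n))
    (hX.iIndepFun_Y.iIndepSet_preimage hX.measurableY hB) ?_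
  have hident (n : ℕ) :
      P (Y n ⁻¹' {y | (n : ℝ) ^ q < |y|}) = P {ω | (n : ℝ) ^ q < |Y 0 ω|} := by
    rw [← Measure.map_apply (hX.measurableY n) (hB n), hX.idY n,
      Measure.map_apply (hX.measurableY 0) (hB n)]
    rfl
  rw [tsum_congr hident]
  exact tsum_measure_rpow_lt_abs_eq_top (hX.measurableY 0) hq hmom

end IsCompoundPoisson

theorem compoundPoisson_noMoment_limsup_eq_top_general
    {Ω : Type*} [MeasurableSpace Ω] (P : Measure Ω)
    (lam : ℝ) (Y T : ℕ → Ω → ℝ) (hX : IsCompoundPoisson P lam Y T)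
    (hmom : ∀ p : ℝ, 0 < p → ∫⁻ ω, ENNReal.ofReal (|Y 0 ω| ^ p) ∂P = ⊤) :
    ∀ α : ℝ, 0 < α → ∀ᵐ ω ∂P,
      Filter.limsup (fun t : ℝ =>
        ENNReal.ofReal (|cppPath Y T t ω| / (1 + t ^ α))) Filter.atTop = ⊤ := by
  intro α hα
  have hq : 0 < 3 * α + 1 := by linarith
  filter_upwards [hX.ae_forall_T_pos, hX.ae_frequently_one_lt_T, hX.ae_eventually_T_le,
    hX.ae_frequently_rpow_lt_abs_Y hq (hmom _ (inv_pos.2 hq))] with ω hT hT_one hT_le hY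
  exact limsup_abs_div_one_add_rpow_eq_top hα.le
    (frequently_exists_le_abs_cppPath hT hT_one hT_le hY)

/-- Proposition 2.4(ii): if the jump heights have no finite absolute moment of any positive
order, then for every `α > 0`, a.s. `limsup_{t→∞} |X_t|/(1+t^α) = +∞`. -/
theorem compoundPoisson_noMoment_limsup_eq_top
    {Ω : Type*} [MeasurableSpace Ω] (P : Measure Ω) [IsProbabilityMeasure P]
    (lam : ℝ) (Y T : ℕ → Ω → ℝ) (hX : IsCompoundPoisson P lam Y T)
    (hmom : ∀ p : ℝ, 0 < p → ∫⁻ ω, ENNReal.ofReal (|Y 0 ω| ^ p) ∂P = ⊤) :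
    ∀ α : ℝ, 0 < α → ∀ᵐ ω ∂P,
      Filter.limsup (fun t : ℝ =>
        ENNReal.ofReal (|cppPath Y T t ω| / (1 + t ^ α))) Filter.atTop = ⊤ :=
  compoundPoisson_noMoment_limsup_eq_top_general P lam Y T hX hmom
end
end

section
/- For φ ∈ S(ℝ^d), let Φ(t) = ∫_{[t,+∞)} φ(s) ds (integral over the set {s ∈ ℝ^d : s ≥ t coordinatewise}). Let p ∈ ℕ and α, β ∈ ℕ^d be multi-indices with |α| ≤ p and |β| ≤ p. Then for every a ∈ ℝ^d there exists a finite constant C = C(p, d, a) such that for all φ ∈ S(ℝ^d), sup_{t ≥ a} |(1 + |t^α|) Φ^{(β)}(t)| ≤ C N_{p+2d}(φ), where t^α = Π_{i=1}^d t_i^{α_i} and Φ^{(β)} denotes the partial derivative of multi-order β. -/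
open MeasureTheory

noncomputable section

/-- Partial derivative in the `i`-th coordinate direction. -/
def pderivCoord {d : ℕ} (i : Fin d) (f : (Fin d → ℝ) → ℝ) : (Fin d → ℝ) → ℝ :=
  fun x => fderiv ℝ f x (Pi.single i 1)

/-- Mixed partial derivative `∂^β = ∂_1^{β 1} ⋯ ∂_d^{β d}`. -/
def mixedPartial {d : ℕ} (β : Fin d → ℕ) (f : (Fin d → ℝ) → ℝ) : (Fin d → ℝ) → ℝ :=
  (List.finRange d).foldr (fun i g => (pderivCoord i)^[β i] g) f

/-! The tail integral is `Φ(t) = ∫_{v ≥ 0} φ(t + v) dv`, so differentiation under the integral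
sign gives `∂^β Φ(t) = ∫_{u ≥ t} ∂^β φ(u) du`. For `a ≤ t ≤ u` each `|t_i|` is at most
`(1 + ‖a‖)(1 + ‖u‖)`, so the weight `1 + |t^α|` is bounded by `2 (1 + ‖a‖)^p (1 + ‖u‖)^p` and can be
moved inside the integral. The Schwartz norm `N_{p+2d}(φ)` controls
`(1 + ‖u‖)^{p+d+1} |∂^β φ(u)|`, and `(1 + ‖u‖)^{-(d+1)}` is integrable on `ℝ^d`. -/

open SchwartzMap LineDeriv Module

section Decay

variable {E F : Type*} [NormedAddCommGroup E] [NormedSpace ℝ E]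
  [NormedAddCommGroup F] [NormedSpace ℝ F]

lemma schwartzNorm_nonneg_s12 (K : ℕ) (φ : 𝓢(E, ℝ)) : 0 ≤ schwartzNorm K φ :=
  Finset.sum_nonneg fun _ _ => Finset.sum_nonneg fun _ _ => apply_nonneg _ φ

lemma sup_seminorm_le_schwartzNorm (K : ℕ) (φ : 𝓢(E, ℝ)) :
    (Finset.Iic (K, K)).sup (fun m => SchwartzMap.seminorm ℝ m.1 m.2) φ ≤ schwartzNorm K φ := by
  have hterm : ∀ k n, 0 ≤ SchwartzMap.seminorm ℝ k n φ := fun _ _ => apply_nonneg _ φ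
  refine Seminorm.finset_sup_apply_le (schwartzNorm_nonneg_s12 K φ) fun m hm => ?_
  rw [Finset.mem_Iic, Prod.le_def] at hm
  calc SchwartzMap.seminorm ℝ m.1 m.2 φ
      ≤ ∑ n ∈ Finset.range (K + 1), SchwartzMap.seminorm ℝ m.1 n φ :=
        Finset.single_le_sum (fun n _ => hterm m.1 n) (by simp [Nat.lt_succ_of_le hm.2])
    _ ≤ schwartzNorm K φ :=
        Finset.single_le_sum (f := fun k => ∑ n ∈ Finset.range (K + 1), _)
          (fun k _ => Finset.sum_nonneg fun n _ => hterm k n) (by simp [Nat.lt_succ_of_le hm.1])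

lemma one_add_norm_pow_mul_norm_iteratedFDeriv_le_schwartzNorm {k l n K : ℕ} (hkl : k + l ≤ K)
    (hn : n ≤ K) (φ : 𝓢(E, ℝ)) (x : E) :
    (1 + ‖x‖) ^ k * ‖iteratedFDeriv ℝ n φ x‖ ≤ 2 ^ K * schwartzNorm K φ * ((1 + ‖x‖) ^ l)⁻¹ := by
  rw [← div_eq_mul_inv, le_div_iff₀ (by positivity), mul_right_comm, ← pow_add]
  calc (1 + ‖x‖) ^ (k + l) * ‖iteratedFDeriv ℝ n φ x‖
      ≤ 2 ^ K * (Finset.Iic (K, K)).sup (fun m => SchwartzMap.seminorm ℝ m.1 m.2) φ :=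
        one_add_le_sup_seminorm_apply (m := (K, K)) hkl hn φ x
    _ ≤ 2 ^ K * schwartzNorm K φ := by gcongr; exact sup_seminorm_le_schwartzNorm K φ

lemma SchwartzMap.exists_one_add_norm_pow_mul_le (f : 𝓢(E, F)) (k : ℕ) :
    ∃ C, ∀ x, (1 + ‖x‖) ^ k * ‖f x‖ ≤ C :=
  ⟨_, fun x => by
    simpa using one_add_le_sup_seminorm_apply (𝕜 := ℝ) (m := (k, 0)) le_rfl le_rfl f x⟩

omit [NormedSpace ℝ E] [NormedSpace ℝ F] in
/-- Peetre's inequality `1 + ‖v‖ ≤ (1 + ‖x‖) (1 + ‖x + v‖)` turns decay of `f` into decay of its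
translates, locally uniformly in the translation. -/
lemma norm_apply_add_le_of_one_add_norm_pow_mul_le {f : E → F} {k : ℕ} {C : ℝ}
    (hf : ∀ y, (1 + ‖y‖) ^ k * ‖f y‖ ≤ C) (x v : E) :
    ‖f (x + v)‖ ≤ (1 + ‖x‖) ^ k * C * ((1 + ‖v‖) ^ k)⁻¹ := by
  have peetre : 1 + ‖v‖ ≤ (1 + ‖x‖) * (1 + ‖x + v‖) := by
    have : ‖v‖ ≤ ‖x + v‖ + ‖x‖ := by
      simpa using norm_sub_le (x + v) x
    nlinarith [norm_nonneg x, norm_nonneg (x + v)]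
  rw [← div_eq_mul_inv, le_div_iff₀ (by positivity)]
  calc ‖f (x + v)‖ * (1 + ‖v‖) ^ k
      ≤ ‖f (x + v)‖ * ((1 + ‖x‖) * (1 + ‖x + v‖)) ^ k := by gcongr
    _ = (1 + ‖x‖) ^ k * ((1 + ‖x + v‖) ^ k * ‖f (x + v)‖) := by rw [mul_pow]; ring
    _ ≤ (1 + ‖x‖) ^ k * C := by gcongr; exact hf _

end Decay

section Differentiation

variable {E F : Type*} [NormedAddCommGroup E] [NormedSpace ℝ E] [FiniteDimensional ℝ E]
  [MeasurableSpace E] [BorelSpace E] [NormedAddCommGroup F] [NormedSpace ℝ F]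
  (μ : Measure E) [μ.IsAddHaarMeasure]

lemma integrable_inv_one_add_norm_pow {n : ℕ} (hn : finrank ℝ E < n) :
    Integrable (fun x : E => ((1 + ‖x‖) ^ n)⁻¹) μ := by
  refine (integrable_one_add_norm (μ := μ) (r := n) (by exact_mod_cast hn)).congr
    (Filter.Eventually.of_forall fun x => ?_)
  simp [Real.rpow_neg (by positivity : (0 : ℝ) ≤ 1 + ‖x‖)]

lemma SchwartzMap.integrable_fderiv_comp_add (ψ : 𝓢(E, F)) (t : E) :
    Integrable (fun v => fderiv ℝ ψ (t + v)) μ :=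
  (fderivCLM ℝ E F ψ).integrable.comp_add_left t

theorem SchwartzMap.hasFDerivAt_setIntegral_comp_add (ψ : 𝓢(E, F)) (s : Set E) (t₀ : E) :
    HasFDerivAt (fun t => ∫ v in s, ψ (t + v) ∂μ) (∫ v in s, fderiv ℝ ψ (t₀ + v) ∂μ) t₀ := by
  set k := finrank ℝ E + 1
  obtain ⟨C, hC⟩ := (fderivCLM ℝ E F ψ).exists_one_add_norm_pow_mul_le k
  have hC0 : 0 ≤ C := le_trans (by positivity) (hC 0)
  refine hasFDerivAt_integral_of_dominated_of_fderiv_le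
    (F := fun t v => ψ (t + v)) (F' := fun t v => fderiv ℝ ψ (t + v))
    (bound := fun v => (2 + ‖t₀‖) ^ k * C * ((1 + ‖v‖) ^ k)⁻¹)
    (Metric.ball_mem_nhds t₀ one_pos)
    (Filter.Eventually.of_forall fun t => (ψ.continuous.comp_aestronglyMeasurable
      (aemeasurable_id.const_add t).aestronglyMeasurable))
    (ψ.integrable.comp_add_left t₀).restrict
    (ψ.integrable_fderiv_comp_add μ t₀).restrict.aestronglyMeasurable
    (Filter.Eventually.of_forall fun v x hx_ball => ?_)
    (((integrable_inv_one_add_norm_pow μ (Nat.lt_succ_self _)).const_mul _).restrict)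
    (Filter.Eventually.of_forall fun v x _ => ?_)
  · have hx : 1 + ‖x‖ ≤ 2 + ‖t₀‖ := by
      linarith [norm_le_norm_add_norm_sub' x t₀, mem_ball_iff_norm.mp hx_ball]
    calc ‖fderiv ℝ ψ (x + v)‖ ≤ (1 + ‖x‖) ^ k * C * ((1 + ‖v‖) ^ k)⁻¹ :=
          norm_apply_add_le_of_one_add_norm_pow_mul_le (f := fderivCLM ℝ E F ψ) hC x v
      _ ≤ (2 + ‖t₀‖) ^ k * C * ((1 + ‖v‖) ^ k)⁻¹ := by gcongr
  · exact (ψ.hasFDerivAt (x + v)).comp x ((hasFDerivAt_id x).add_const v)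

lemma SchwartzMap.fderiv_setIntegral_comp_add_apply (ψ : 𝓢(E, F)) (s : Set E) (t m : E) :
    fderiv ℝ (fun t => ∫ v in s, ψ (t + v) ∂μ) t m = ∫ v in s, ∂_{m} ψ (t + v) ∂μ := by
  rw [(ψ.hasFDerivAt_setIntegral_comp_add μ s t).fderiv,
    ContinuousLinearMap.integral_apply (ψ.integrable_fderiv_comp_add μ t).restrict]
  rfl

end Differentiation

section TailIntegral

lemma setIntegral_Ici_eq_setIntegral_Ici_zero_comp_add {G F : Type*} [AddCommGroup G]
    [PartialOrder G] [IsOrderedAddMonoid G] [MeasurableSpace G] [MeasurableAdd G]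
    [NormedAddCommGroup F] [NormedSpace ℝ F] (μ : Measure G) [μ.IsAddLeftInvariant]
    (g : G → F) (t : G) :
    ∫ u in Set.Ici t, g u ∂μ = ∫ v in Set.Ici 0, g (t + v) ∂μ := by
  rw [← (measurePreserving_add_left μ t).setIntegral_image_emb
    (MeasurableEquiv.addLeft t).measurableEmbedding, Set.image_const_add_Ici, add_zero]

variable {d : ℕ}

def tailIntegral (ψ : 𝓢(Fin d → ℝ, ℝ)) (t : Fin d → ℝ) : ℝ :=
  ∫ u in Set.Ici t, ψ u

lemma tailIntegral_eq_setIntegral_Ici_zero (ψ : 𝓢(Fin d → ℝ, ℝ)) :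
    tailIntegral ψ = fun t => ∫ v in Set.Ici 0, ψ (t + v) :=
  funext (setIntegral_Ici_eq_setIntegral_Ici_zero_comp_add volume ψ)

lemma pderivCoord_tailIntegral (i : Fin d) (ψ : 𝓢(Fin d → ℝ, ℝ)) :
    pderivCoord i (tailIntegral ψ) = tailIntegral (∂_{(Pi.single i 1 : Fin d → ℝ)} ψ) := by
  funext t
  simp only [pderivCoord, tailIntegral_eq_setIntegral_Ici_zero]
  exact ψ.fderiv_setIntegral_comp_add_apply volume _ t _

def mixedLineDeriv (β : Fin d → ℕ) (ψ : 𝓢(Fin d → ℝ, ℝ)) : 𝓢(Fin d → ℝ, ℝ) :=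
  (List.finRange d).foldr (fun i g => (lineDerivOp (Pi.single i 1 : Fin d → ℝ))^[β i] g) ψ

lemma mixedPartial_tailIntegral (β : Fin d → ℕ) (ψ : 𝓢(Fin d → ℝ, ℝ)) :
    mixedPartial β (tailIntegral ψ) = tailIntegral (mixedLineDeriv β ψ) := by
  have hsemiconj : ∀ i n, Function.Semiconj tailIntegral
      (lineDerivOp (Pi.single i 1 : Fin d → ℝ))^[n] (pderivCoord i)^[n] := fun i =>
    Function.Semiconj.iterate_right fun ψ => (pderivCoord_tailIntegral i ψ).symm
  unfold mixedPartial mixedLineDeriv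
  induction List.finRange d with
  | nil => rfl
  | cons i l ih => rw [List.foldr_cons, List.foldr_cons, ih, hsemiconj]

end TailIntegral

section IteratedLineDeriv

lemma List.foldr_iterate_eq_foldr_flatMap_replicate {ι σ : Type*} (P : ι → σ → σ) (c : ι → ℕ)
    (l : List ι) (x : σ) :
    l.foldr (fun i y => (P i)^[c i] y) x = (l.flatMap fun i => replicate (c i) i).foldr P x := by
  induction l with
  | nil => rfl
  | cons i l ih =>
    have hrep : ∀ k y, (replicate k i).foldr P y = (P i)^[k] y := fun k y => by
      induction k with
      | zero => rfl
      | succ k ihk => rw [replicate_succ, foldr_cons, ihk, Function.iterate_succ_apply']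
    rw [foldr_cons, flatMap_cons, foldr_append, ← ih, hrep]

lemma List.foldr_lineDerivOp_eq_iteratedLineDerivOp {ι V E : Type*} [LineDeriv V E E]
    (e : ι → V) (L : List ι) (f : E) :
    L.foldr (fun i g => ∂_{e i} g) f = ∂^{fun j : Fin L.length => e (L.get j)} f := by
  induction L with
  | nil => rfl
  | cons i L ih =>
    rw [foldr_cons, ih, iteratedLineDerivOp_succ_left]
    rfl

lemma norm_mixedLineDeriv_le {d : ℕ} (β : Fin d → ℕ) (φ : 𝓢(Fin d → ℝ, ℝ)) (u : Fin d → ℝ) :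
    ‖mixedLineDeriv β φ u‖ ≤ ‖iteratedFDeriv ℝ (∑ i, β i) φ u‖ := by
  set L := (List.finRange d).flatMap fun i => List.replicate (β i) i
  have hlen : L.length = ∑ i, β i := by
    simp [L, List.length_flatMap, Fin.sum_univ_def]
  rw [mixedLineDeriv, List.foldr_iterate_eq_foldr_flatMap_replicate,
    List.foldr_lineDerivOp_eq_iteratedLineDerivOp, iteratedLineDerivOp_eq_iteratedFDeriv, ← hlen]
  refine ((iteratedFDeriv ℝ L.length φ u).le_opNorm _).trans_eq ?_
  simp [Pi.norm_single]

end IteratedLineDeriv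

section Weight

lemma abs_prod_pow_le_pow {ι : Type*} [Fintype ι] {x : ι → ℝ} {M : ℝ} (hM : 1 ≤ M)
    (hx : ∀ i, |x i| ≤ M) {α : ι → ℕ} {p : ℕ} (hα : ∑ i, α i ≤ p) :
    |∏ i, x i ^ α i| ≤ M ^ p :=
  calc |∏ i, x i ^ α i| = ∏ i, |x i| ^ α i := by simp [Finset.abs_prod, abs_pow]
    _ ≤ ∏ i, M ^ α i := by gcongr with i; exact hx i
    _ = M ^ ∑ i, α i := Finset.prod_pow_eq_pow_sum _ _ _
    _ ≤ M ^ p := pow_le_pow_right₀ hM hα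

lemma one_add_abs_prod_pow_le {ι : Type*} [Fintype ι] {a t u : ι → ℝ} (hat : a ≤ t) (htu : t ≤ u)
    {α : ι → ℕ} {p : ℕ} (hα : ∑ i, α i ≤ p) :
    1 + |∏ i, t i ^ α i| ≤ 2 * (1 + ‖a‖) ^ p * (1 + ‖u‖) ^ p := by
  set M := (1 + ‖a‖) * (1 + ‖u‖)
  have hM : 1 ≤ M := by nlinarith [norm_nonneg a, norm_nonneg u]
  have ht : ∀ i, |t i| ≤ M := fun i =>
    calc |t i| ≤ max |a i| |u i| := abs_le_max_abs_abs (hat i) (htu i)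
      _ ≤ ‖a i‖ + ‖u i‖ := max_le_add_of_nonneg (abs_nonneg _) (abs_nonneg _)
      _ ≤ ‖a‖ + ‖u‖ := add_le_add (norm_le_pi_norm a i) (norm_le_pi_norm u i)
      _ ≤ M := by nlinarith [norm_nonneg a, norm_nonneg u]
  calc 1 + |∏ i, t i ^ α i| ≤ M ^ p + M ^ p :=
        add_le_add (one_le_pow₀ hM) (abs_prod_pow_le_pow hM ht hα)
    _ = 2 * (1 + ‖a‖) ^ p * (1 + ‖u‖) ^ p := by rw [mul_pow]; ring

end Weight

lemma one_add_abs_prod_pow_mul_norm_mixedLineDeriv_le {d p K : ℕ} {α β : Fin d → ℕ}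
    (hα : ∑ i, α i ≤ p) (hβ : ∑ i, β i ≤ K) (hK : p + (d + 1) ≤ K) {a t u : Fin d → ℝ}
    (hat : a ≤ t) (htu : t ≤ u) (φ : 𝓢(Fin d → ℝ, ℝ)) :
    (1 + |∏ i, t i ^ α i|) * ‖mixedLineDeriv β φ u‖
      ≤ 2 * (1 + ‖a‖) ^ p * (2 ^ K * schwartzNorm K φ) * ((1 + ‖u‖) ^ (d + 1))⁻¹ :=
  calc (1 + |∏ i, t i ^ α i|) * ‖mixedLineDeriv β φ u‖
      ≤ 2 * (1 + ‖a‖) ^ p * ((1 + ‖u‖) ^ p * ‖iteratedFDeriv ℝ (∑ i, β i) φ u‖) := by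
        rw [← mul_assoc]
        exact mul_le_mul (one_add_abs_prod_pow_le hat htu hα) (norm_mixedLineDeriv_le β φ u)
          (norm_nonneg _) (by positivity)
    _ ≤ 2 * (1 + ‖a‖) ^ p * (2 ^ K * schwartzNorm K φ * ((1 + ‖u‖) ^ (d + 1))⁻¹) :=
        mul_le_mul_of_nonneg_left
          (one_add_norm_pow_mul_norm_iteratedFDeriv_le_schwartzNorm hK hβ φ u) (by positivity)
    _ = _ := by ring

/-- Lemma 3.9: for `Φ(t) = ∫_{[t,∞)} φ(s) ds` and multi-indices `|α|, |β| ≤ p`, on any set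
`{t ≥ a}` one has `sup_{t ≥ a} |(1 + |t^α|) Φ^{(β)}(t)| ≤ C N_{p+2d}(φ)`. -/
theorem tail_integral_schwartz_estimate {d : ℕ} (hd : 0 < d) (p : ℕ) (α β : Fin d → ℕ)
    (hα : ∑ i, α i ≤ p) (hβ : ∑ i, β i ≤ p) (a : Fin d → ℝ) :
    ∃ C : ℝ, ∀ φ : SchwartzMap (Fin d → ℝ) ℝ, ∀ t : Fin d → ℝ, a ≤ t →
      |(1 + |∏ i, t i ^ α i|) *
          mixedPartial β (fun s => ∫ u in {u : Fin d → ℝ | s ≤ u}, φ u) t|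
        ≤ C * schwartzNorm (p + 2 * d) φ := by
  set K := p + 2 * d
  set w : (Fin d → ℝ) → ℝ := fun u => ((1 + ‖u‖) ^ (d + 1))⁻¹
  have hw : Integrable w := integrable_inv_one_add_norm_pow volume (by simp)
  refine ⟨2 * (1 + ‖a‖) ^ p * 2 ^ K * ∫ u, w u, fun φ t hat => ?_⟩
  set A := 1 + |∏ i, t i ^ α i|
  set B := 2 * (1 + ‖a‖) ^ p * (2 ^ K * schwartzNorm K φ)
  have hB : 0 ≤ B := by have := schwartzNorm_nonneg_s12 K φ; positivity
  have hpointwise : ∀ u ∈ Set.Ici t, ‖A * mixedLineDeriv β φ u‖ ≤ B * w u := fun u htu => by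
    rw [norm_mul, Real.norm_of_nonneg (by positivity)]
    exact one_add_abs_prod_pow_mul_norm_mixedLineDeriv_le hα (by omega) (by omega) hat htu φ
  calc |A * mixedPartial β (tailIntegral φ) t|
      = ‖∫ u in Set.Ici t, A * mixedLineDeriv β φ u‖ := by
        rw [mixedPartial_tailIntegral, tailIntegral, integral_const_mul, Real.norm_eq_abs]
    _ ≤ ∫ u in Set.Ici t, B * w u :=
        norm_integral_le_of_norm_le (hw.const_mul B).restrict
          (ae_restrict_of_forall_mem measurableSet_Ici hpointwise)
    _ ≤ B * ∫ u, w u := by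
        rw [integral_const_mul]
        exact mul_le_mul_of_nonneg_left
          (setIntegral_le_integral hw (Filter.Eventually.of_forall fun u => by positivity)) hB
    _ = 2 * (1 + ‖a‖) ^ p * 2 ^ K * (∫ u, w u) * schwartzNorm K φ := by ring
end
end

section
/- Let X be a d-parameter Lévy field and let α > 0. If there exists t ∈ (0,∞)^d (all coordinates strictly positive) such that E(|X_t|^α) < +∞, then E(|X_t|^α) < +∞ for every t ∈ ℝ₊^d. -/
/-
Cutting the box `]0, b]` by the hyperplane `{t_j = m}` writes `X_b` (a.s. equal to the increment
over `]0, b]`) as `X` at the lowered corner plus an independent increment over the upper slab,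
and by stationarity that slab increment has the law of `X` at `b` with `b_j` replaced by
`b_j - m`. If a sum of two independent variables is in `L^α`, so is each summand (by Fubini,
fix a good value of the other one), so lowering a coordinate keeps the moment finite; the sum of
two `L^α` variables is in `L^α`, so coordinate `j` can be raised in steps of `t₀_j`. Replacing
the coordinates of `t₀` by those of `t` one at a time reaches every `t ≥ 0`.
-/

open MeasureTheory ProbabilityTheory Filter

noncomputable section

/-- The increment `Δ_a^b X(ω) = Σ_{ε ∈ {0,1}^d} (-1)^{|ε|} X_{c_ε(a,b)}(ω)`, where
`c_ε(a,b)_i = a_i` if `ε_i = 1` and `b_i` otherwise. -/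
def boxIncrement {Ω : Type*} {d : ℕ} (X : (Fin d → ℝ) → Ω → ℝ) (a b : Fin d → ℝ)
    (ω : Ω) : ℝ :=
  ∑ ε : Fin d → Bool, (-1 : ℝ) ^ (Finset.univ.filter fun i => ε i).card *
    X (fun i => if ε i then a i else b i) ω

/-- The half-open box `]a, b]` in `ℝ^d`. -/
def boxIoc {d : ℕ} (a b : Fin d → ℝ) : Set (Fin d → ℝ) :=
  {t | ∀ i, a i < t i ∧ t i ≤ b i}

/-- A `d`-parameter Lévy field: a.s. lamp sample paths vanishing on the boundary of `ℝ₊^d`,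
continuity in probability, and independent, stationary increments over disjoint boxes. -/
structure IsLevyField {Ω : Type*} [MeasurableSpace Ω] {d : ℕ} (P : Measure Ω)
    (X : (Fin d → ℝ) → Ω → ℝ) : Prop where
  measurable : ∀ t, Measurable (X t)
  lamp : ∀ᵐ ω ∂P,
    (∀ (R : Fin d → Bool) (t : Fin d → ℝ), 0 ≤ t →
      ∃ l : ℝ, Tendsto (fun u => X u ω)
        (nhdsWithin t {u : Fin d → ℝ | 0 ≤ u ∧ ∀ i, if R i then t i ≤ u i else u i < t i})
        (nhds l)) ∧
    (∀ t : Fin d → ℝ, 0 ≤ t →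
      Tendsto (fun u => X u ω)
        (nhdsWithin t {u : Fin d → ℝ | 0 ≤ u ∧ t ≤ u}) (nhds (X t ω))) ∧
    (∀ t : Fin d → ℝ, 0 ≤ t → (∃ i, t i = 0) → X t ω = 0)
  stochContinuous : ∀ t : Fin d → ℝ, 0 ≤ t → ∀ ε : ℝ, 0 < ε →
    Tendsto (fun s => P {ω | ε ≤ |X s ω - X t ω|})
      (nhdsWithin t {s : Fin d → ℝ | 0 ≤ s}) (nhds 0)
  indepIncrements : ∀ (n : ℕ) (a b : Fin n → Fin d → ℝ),
    (∀ k, 0 ≤ a k ∧ a k ≤ b k) →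
    (Pairwise fun k l => Disjoint (boxIoc (a k) (b k)) (boxIoc (a l) (b l))) →
    iIndepFun (fun k => boxIncrement X (a k) (b k)) P
  statIncrements : ∀ a b s : Fin d → ℝ, 0 ≤ a → a ≤ b → 0 ≤ a + s →
    Measure.map (boxIncrement X a b) P = Measure.map (boxIncrement X (a + s) (b + s)) P

open Function
open scoped ENNReal

theorem ProbabilityTheory.IndepFun.memLp_left_of_memLp_add {Ω E : Type*} [MeasurableSpace Ω]
    {P : Measure Ω} [IsProbabilityMeasure P] [NormedAddCommGroup E] [MeasurableSpace E]
    [BorelSpace E] [SecondCountableTopology E] {Y Z : Ω → E} {p : ℝ≥0∞} (hp0 : p ≠ 0) (hp : p ≠ ∞)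
    (hY : Measurable Y) (hZ : Measurable Z) (hYZ : IndepFun Y Z P)
    (h : MemLp (Y + Z) p P) : MemLp Y p P := by
  set μ := P.map Y
  set ν := P.map Z
  have : IsProbabilityMeasure ν := Measure.isProbabilityMeasure_map hZ.aemeasurable
  have hadd : Measurable fun q : E × E => ‖q.1 + q.2‖ₑ ^ p.toReal :=
    (measurable_fst.add measurable_snd).enorm.pow_const _
  have hprod : MemLp (fun q : E × E => q.1 + q.2) p (μ.prod ν) := by
    rw [← (indepFun_iff_map_prod_eq_prod_map_map hY.aemeasurable hZ.aemeasurable).1 hYZ]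
    exact (memLp_map_measure_iff (measurable_fst.add measurable_snd).aestronglyMeasurable
      (hY.prodMk hZ).aemeasurable).2 h
  have hfiber : ∀ᵐ z ∂ν, ∫⁻ y, ‖y + z‖ₑ ^ p.toReal ∂μ < ∞ := by
    refine ae_lt_top (hadd.comp measurable_swap).lintegral_prod_right' ?_
    rw [← lintegral_prod_symm' _ hadd]
    exact ((eLpNorm_lt_top_iff_lintegral_rpow_enorm_lt_top hp0 hp).1 hprod.2).ne
  obtain ⟨z, hz⟩ := hfiber.exists
  have hshift : MemLp (fun y => y + z) p μ :=
    ⟨(measurable_id.add_const z).aestronglyMeasurable,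
      (eLpNorm_lt_top_iff_lintegral_rpow_enorm_lt_top hp0 hp).2 hz⟩
  have hid : MemLp id p μ := by
    convert hshift.sub (memLp_const z) using 1
    ext y
    simp
  exact (memLp_map_measure_iff aestronglyMeasurable_id hY.aemeasurable).1 hid

section BoxIncrement

variable {Ω : Type*} {d : ℕ}

theorem neg_one_pow_card_update_not (ε : Fin d → Bool) (j : Fin d) :
    (-1 : ℝ) ^ (Finset.univ.filter fun i => update ε j (!ε j) i).card
      = -(-1) ^ (Finset.univ.filter fun i => ε i).card := by
  have hsign : ∀ δ : Fin d → Bool,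
      (-1 : ℝ) ^ (Finset.univ.filter fun i => δ i).card = ∏ i, if δ i then -1 else 1 := by
    intro δ
    rw [Finset.prod_ite, Finset.prod_const_one, mul_one, Finset.prod_const]
  rw [hsign, hsign]
  simp_rw [apply_update (fun _ (b : Bool) => if b then (-1 : ℝ) else 1)]
  rw [Finset.prod_update_of_mem (Finset.mem_univ j),
    Finset.prod_eq_mul_prod_sdiff_singleton_of_mem (Finset.mem_univ j)]
  cases ε j <;> simp

theorem boxIncrement_eq_add_update (X : (Fin d → ℝ) → Ω → ℝ) (a b : Fin d → ℝ) (j : Fin d)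
    (m : ℝ) (ω : Ω) :
    boxIncrement X a b ω
      = boxIncrement X a (update b j m) ω + boxIncrement X (update a j m) b ω := by
  set c : (Fin d → Bool) → Fin d → ℝ := fun ε i => if ε i then a i else b i
  set s : (Fin d → Bool) → ℝ := fun ε => (-1) ^ (Finset.univ.filter fun i => ε i).card
  -- flipping `ε j` changes the sign but not the corner once its `j`-th coordinate is reset to `m`
  have hcancel : ∑ ε, s ε * X (update (c ε) j m) ω = 0 := by
    have hflip : Involutive fun ε : Fin d → Bool => update ε j (!ε j) := fun ε => by simp
    have hc : ∀ ε, update (c (update ε j (!ε j))) j m = update (c ε) j m := fun ε => by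
      ext i
      by_cases hi : i = j <;> simp [hi, c]
    have := Equiv.sum_comp (hflip.toPerm _) fun ε => s ε * X (update (c ε) j m) ω
    simp only [Involutive.coe_toPerm, hc, s, neg_one_pow_card_update_not, neg_mul,
      Finset.sum_neg_distrib] at this
    linarith
  have hcorner : ∀ ε,
      s ε * X (fun i => if ε i then a i else update b j m i) ω
        + s ε * X (fun i => if ε i then update a j m i else b i) ω
      = s ε * X (c ε) ω + s ε * X (update (c ε) j m) ω := by
    intro ε
    have hlo : (fun i => if ε i then a i else update b j m i)
        = if ε j then c ε else update (c ε) j m := by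
      ext i
      by_cases hi : i = j <;> cases h : ε j <;> simp [hi, h, c]
    have hhi : (fun i => if ε i then update a j m i else b i)
        = if ε j then update (c ε) j m else c ε := by
      ext i
      by_cases hi : i = j <;> cases h : ε j <;> simp [hi, h, c]
    rw [hlo, hhi]
    cases ε j <;> simp [add_comm]
  have hsum : boxIncrement X a (update b j m) ω + boxIncrement X (update a j m) b ω
      = ∑ ε, (s ε * X (c ε) ω + s ε * X (update (c ε) j m) ω) := by
    rw [boxIncrement, boxIncrement, ← Finset.sum_add_distrib]
    exact Finset.sum_congr rfl fun ε _ => hcorner ε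
  rw [hsum, Finset.sum_add_distrib, hcancel, add_zero]
  rfl

theorem disjoint_boxIoc_update (a b : Fin d → ℝ) (j : Fin d) (m : ℝ) :
    Disjoint (boxIoc a (update b j m)) (boxIoc (update a j m) b) :=
  Set.disjoint_left.2 fun x hlo hhi => by
    have h₁ := (hlo j).2
    have h₂ := (hhi j).1
    simp only [update_self] at h₁ h₂
    linarith

end BoxIncrement

namespace IsLevyField

variable {Ω : Type*} [MeasurableSpace Ω] {P : Measure Ω} {d : ℕ} {X : (Fin d → ℝ) → Ω → ℝ}

theorem measurable_boxIncrement (hX : IsLevyField P X) (a b : Fin d → ℝ) :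
    Measurable (boxIncrement X a b) :=
  Finset.measurable_sum _ fun _ _ => (hX.measurable _).const_mul _

/-- Every corner of `]0, b]` other than `b` itself lies on the boundary, where `X` vanishes. -/
theorem boxIncrement_zero_ae_eq (hX : IsLevyField P X) {b : Fin d → ℝ} (hb : 0 ≤ b) :
    boxIncrement X 0 b =ᵐ[P] X b := by
  filter_upwards [hX.lamp] with ω hω
  obtain ⟨-, -, hzero⟩ := hω
  rw [boxIncrement, Finset.sum_eq_single_of_mem (fun _ => false) (Finset.mem_univ _)]
  · simp
  intro ε _ hε
  obtain ⟨i, hi⟩ : ∃ i, ε i = true := by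
    by_contra! h
    exact hε (funext fun i => by simpa using h i)
  have hcorner : 0 ≤ fun k => if ε k then (0 : Fin d → ℝ) k else b k := fun k => by
    dsimp only
    split_ifs
    exacts [le_rfl, hb k]
  rw [hzero _ hcorner ⟨i, by simp [hi]⟩, mul_zero]

theorem indepFun_boxIncrement (hX : IsLevyField P X) {a b a' b' : Fin d → ℝ} (ha : 0 ≤ a)
    (hab : a ≤ b) (ha' : 0 ≤ a') (hab' : a' ≤ b') (h : Disjoint (boxIoc a b) (boxIoc a' b')) :
    IndepFun (boxIncrement X a b) (boxIncrement X a' b') P := by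
  have hpair := hX.indepIncrements 2 ![a, a'] ![b, b']
    (Fin.forall_fin_two.2 ⟨⟨ha, hab⟩, ⟨ha', hab'⟩⟩)
    (fun k l hkl => by fin_cases k <;> fin_cases l <;> simp_all [h.symm])
  simpa using hpair.indepFun zero_ne_one

theorem identDistrib_boxIncrement_add (hX : IsLevyField P X) {a b s : Fin d → ℝ} (ha : 0 ≤ a)
    (hab : a ≤ b) (has : 0 ≤ a + s) :
    IdentDistrib (boxIncrement X a b) (boxIncrement X (a + s) (b + s)) P P where
  aemeasurable_fst := (hX.measurable_boxIncrement a b).aemeasurable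
  aemeasurable_snd := (hX.measurable_boxIncrement _ _).aemeasurable
  map_eq := hX.statIncrements a b s ha hab has

variable {p : ℝ≥0∞} {b : Fin d → ℝ} {j : Fin d} {m : ℝ}

theorem memLp_update_of_le [IsProbabilityMeasure P] (hX : IsLevyField P X) (hp0 : p ≠ 0)
    (hp : p ≠ ∞) (hb : 0 ≤ b) (hm : 0 ≤ m) (hmb : m ≤ b j) (h : MemLp (X b) p P) :
    MemLp (X (update b j m)) p P := by
  have hb' : 0 ≤ update b j m := le_update_iff.2 ⟨hm, fun i _ => hb i⟩
  have hsplit : X b =ᵐ[P] boxIncrement X 0 (update b j m) + boxIncrement X (update 0 j m) b :=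
    (hX.boxIncrement_zero_ae_eq hb).symm.trans
      (.of_forall fun ω => boxIncrement_eq_add_update X 0 b j m ω)
  have hind := hX.indepFun_boxIncrement le_rfl hb' (le_update_iff.2 ⟨hm, fun _ _ => le_rfl⟩)
    (update_le_iff.2 ⟨hmb, fun i _ => hb i⟩) (disjoint_boxIoc_update 0 b j m)
  have hlow := hind.memLp_left_of_memLp_add hp0 hp (hX.measurable_boxIncrement _ _)
    (hX.measurable_boxIncrement _ _) ((memLp_congr_ae hsplit).1 h)
  exact (memLp_congr_ae (hX.boxIncrement_zero_ae_eq hb')).1 hlow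

theorem memLp_update_add (hX : IsLevyField P X) (hb : 0 ≤ b) (hm : 0 ≤ m)
    (hb_mem : MemLp (X b) p P) (hm_mem : MemLp (X (update b j m)) p P) :
    MemLp (X (update b j (b j + m))) p P := by
  set B := update b j (b j + m)
  have hB : 0 ≤ B := le_update_iff.2 ⟨add_nonneg (hb j) hm, fun i _ => hb i⟩
  have hb' : 0 ≤ update b j m := le_update_iff.2 ⟨hm, fun i _ => hb i⟩
  have hsplit : X B =ᵐ[P] boxIncrement X 0 b + boxIncrement X (update 0 j (b j)) B := by
    filter_upwards [hX.boxIncrement_zero_ae_eq hB] with ω hω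
    rw [← hω, boxIncrement_eq_add_update X 0 B j (b j) ω, update_idem, update_eq_self]
    rfl
  -- the upper slab is the translate of `]0, update b j m]` by `b j` in direction `j`
  have hslab : IdentDistrib (boxIncrement X 0 (update b j m))
      (boxIncrement X (update 0 j (b j)) B) P P := by
    have hshift := hX.identDistrib_boxIncrement_add le_rfl hb' (s := update 0 j (b j))
      (by simpa using le_update_iff.2 ⟨hb j, fun _ _ => le_rfl⟩)
    have hB_eq : update b j m + update (0 : Fin d → ℝ) j (b j) = B := by
      ext i
      by_cases hi : i = j <;> simp [B, hi, add_comm]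
    rwa [zero_add, hB_eq] at hshift
  refine (memLp_congr_ae hsplit).2 (MemLp.add ?_ ?_)
  · exact (memLp_congr_ae (hX.boxIncrement_zero_ae_eq hb)).2 hb_mem
  · exact hslab.memLp_snd ((memLp_congr_ae (hX.boxIncrement_zero_ae_eq hb')).2 hm_mem)

theorem memLp_update [IsProbabilityMeasure P] (hX : IsLevyField P X) (hp0 : p ≠ 0)
    (hp : p ≠ ∞) (hb : 0 ≤ b) (hbj : 0 < b j) (h : MemLp (X b) p P) (hm : 0 ≤ m) :
    MemLp (X (update b j m)) p P := by
  have hmul : ∀ n : ℕ, MemLp (X (update b j (n * b j))) p P := by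
    intro n
    induction n with
    | zero => simpa using hX.memLp_update_of_le hp0 hp hb le_rfl hbj.le h
    | succ n ih =>
      have hnext := hX.memLp_update_add (j := j) (le_update_iff.2
        ⟨by positivity, fun i _ => hb i⟩) hbj.le ih (by simpa using h)
      simpa [add_mul] using hnext
  obtain ⟨n, hn⟩ := exists_nat_ge (m / b j)
  have hmn : m ≤ n * b j := (div_le_iff₀ hbj).1 hn
  simpa using hX.memLp_update_of_le (j := j) hp0 hp
    (le_update_iff.2 ⟨by positivity, fun i _ => hb i⟩) hm (by simpa using hmn) (hmul n)

theorem memLp_of_memLp_of_forall_pos [IsProbabilityMeasure P] (hX : IsLevyField P X)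
    (hp0 : p ≠ 0) (hp : p ≠ ∞) {t₀ : Fin d → ℝ} (ht₀ : ∀ i, 0 < t₀ i) (h : MemLp (X t₀) p P)
    {t : Fin d → ℝ} (ht : 0 ≤ t) : MemLp (X t) p P := by
  classical
  suffices ∀ S : Finset (Fin d), MemLp (X (S.piecewise t t₀)) p P by
    simpa using this Finset.univ
  intro S
  induction S using Finset.induction_on with
  | empty => simpa using h
  | insert j S hj ih =>
    rw [Finset.piecewise_insert]
    refine hX.memLp_update hp0 hp (S.le_piecewise_of_le_of_le ht fun i => (ht₀ i).le) ?_ ih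
      (ht j)
    simpa [Finset.piecewise_eq_of_notMem _ _ _ hj] using ht₀ j

end IsLevyField

theorem memLp_ofReal_iff_lintegral_abs_rpow_lt_top {Ω : Type*} [MeasurableSpace Ω]
    {μ : Measure Ω} {f : Ω → ℝ} (hf : AEStronglyMeasurable f μ) {α : ℝ} (hα : 0 < α) :
    MemLp f (ENNReal.ofReal α) μ ↔ ∫⁻ ω, ENNReal.ofReal (|f ω| ^ α) ∂μ < ∞ := by
  rw [MemLp, and_iff_right hf, eLpNorm_lt_top_iff_lintegral_rpow_enorm_lt_top
    (by simpa using hα) ENNReal.ofReal_ne_top, ENNReal.toReal_ofReal hα.le]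
  simp_rw [Real.enorm_eq_ofReal_abs, ENNReal.ofReal_rpow_of_nonneg (abs_nonneg _) hα.le]

theorem levyField_moment_time_independent_general
    {Ω : Type*} [MeasurableSpace Ω] (P : Measure Ω) [IsProbabilityMeasure P]
    {d : ℕ} (X : (Fin d → ℝ) → Ω → ℝ) (hX : IsLevyField P X)
    (α : ℝ) (hα : 0 < α) (t₀ : Fin d → ℝ) (ht₀ : ∀ i, 0 < t₀ i)
    (hmom : ∫⁻ ω, ENNReal.ofReal (|X t₀ ω| ^ α) ∂P < ⊤) :
    ∀ t : Fin d → ℝ, 0 ≤ t → ∫⁻ ω, ENNReal.ofReal (|X t ω| ^ α) ∂P < ⊤ := by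
  have hmeas : ∀ t, AEStronglyMeasurable (X t) P := fun t =>
    (hX.measurable t).aestronglyMeasurable
  have hp0 : ENNReal.ofReal α ≠ 0 := by simpa using hα
  intro t ht
  rw [← memLp_ofReal_iff_lintegral_abs_rpow_lt_top (hmeas t) hα]
  exact hX.memLp_of_memLp_of_forall_pos hp0 ENNReal.ofReal_ne_top ht₀
    ((memLp_ofReal_iff_lintegral_abs_rpow_lt_top (hmeas t₀) hα).2 hmom) ht

/-- Lemma 3.10: for a `d`-parameter Lévy field, if `E(|X_t|^α) < ∞` for one `t` with all
coordinates positive, then `E(|X_t|^α) < ∞` for all `t ∈ ℝ₊^d`. -/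
theorem levyField_moment_time_independent
    {Ω : Type*} [MeasurableSpace Ω] (P : Measure Ω) [IsProbabilityMeasure P]
    {d : ℕ} (hd : 0 < d) (X : (Fin d → ℝ) → Ω → ℝ) (hX : IsLevyField P X)
    (α : ℝ) (hα : 0 < α) (t₀ : Fin d → ℝ) (ht₀ : ∀ i, 0 < t₀ i)
    (hmom : ∫⁻ ω, ENNReal.ofReal (|X t₀ ω| ^ α) ∂P < ⊤) :
    ∀ t : Fin d → ℝ, 0 ≤ t → ∫⁻ ω, ENNReal.ofReal (|X t ω| ^ α) ∂P < ⊤ :=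
  levyField_moment_time_independent_general P X hX α hα t₀ ht₀ hmom
end
end

section
/- Let d ≥ 1 and let r > d be an integer. Let φ : ℝ₊^d → ℝ be a measurable function such that |φ(t)| ≤ C/(1 + |t|^r) for all t ∈ ℝ₊^d, for some constant C > 1. Then there exists a finite constant C′ (depending only on C, r and d) such that for every x ∈ ℝ with |x| > 1, ∫_{ℝ₊^d} (|x φ(t)| ∧ 1) dt ≤ C′ |x|^{d/r}. -/
open MeasureTheory Module
open scoped ENNReal

/-!
Put `a = C|x|` and `R = a^{1/r}`. The integrand is at most `min (a / (1 + |t|^r)) 1`, and this is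
at most `2^r (1 + |t|/R)^{-r}`: the bound `1` wins on the ball of radius `R`, the tail `a / |t|^r`
outside it. Enlarging the orthant to all of `ℝ^d` and rescaling `t = R s` bounds the integral by
`2^r R^d ∫ (1 + |s|)^{-r} ds`, a finite multiple of `R^d = (C|x|)^{d/r}` because `r > d`.
Any norm on `ℝ^d` serves for `|t|` here; the sup norm, being at most the Euclidean one, does.
-/

theorem pi_norm_le_sqrt_sum_sq {ι : Type*} [Fintype ι] (t : ι → ℝ) :
    ‖t‖ ≤ √(∑ i, t i ^ 2) :=
  (pi_norm_le_iff_of_nonneg (Real.sqrt_nonneg _)).2 fun i => by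
    simpa [EuclideanSpace.norm_eq] using
      PiLp.norm_apply_le (WithLp.toLp 2 t : EuclideanSpace ℝ ι) i

theorem min_div_one_add_pow_le (n : ℕ) {R s : ℝ} (hR : 0 < R) (hs : 0 ≤ s) :
    min (R ^ n / (1 + s ^ n)) 1 ≤ 2 ^ n / (1 + s / R) ^ n := by
  rcases le_total s R with h | h
  · have h2 : 1 + s / R ≤ 2 := by linarith [(div_le_one hR).2 h]
    calc min (R ^ n / (1 + s ^ n)) 1 ≤ 1 := min_le_right _ _
      _ ≤ 2 ^ n / (1 + s / R) ^ n := by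
        rw [one_le_div (by positivity)]
        gcongr
  · have hs0 : 0 < s := hR.trans_le h
    have h2 : 1 + s / R ≤ 2 * (s / R) := by linarith [(one_le_div hR).2 h]
    calc min (R ^ n / (1 + s ^ n)) 1 ≤ R ^ n / (1 + s ^ n) := min_le_left _ _
      _ ≤ R ^ n / s ^ n := by gcongr; linarith
      _ = 2 ^ n / (2 * (s / R)) ^ n := by rw [mul_pow, div_pow]; field_simp
      _ ≤ 2 ^ n / (1 + s / R) ^ n := by gcongr

section AddHaar

variable {E : Type*} [NormedAddCommGroup E] [NormedSpace ℝ E] [FiniteDimensional ℝ E]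
  [MeasurableSpace E] [BorelSpace E] (μ : Measure E) [μ.IsAddHaarMeasure]

theorem lintegral_comp_inv_smul (f : E → ℝ≥0∞) {R : ℝ} (hR : 0 < R) :
    ∫⁻ x, f (R⁻¹ • x) ∂μ = ENNReal.ofReal (R ^ finrank ℝ E) * ∫⁻ x, f x ∂μ := by
  have hR' : R⁻¹ ≠ 0 := inv_ne_zero hR.ne'
  calc ∫⁻ x, f (R⁻¹ • x) ∂μ = ∫⁻ x, f x ∂(Measure.map (R⁻¹ • ·) μ) :=
        (lintegral_map_equiv f (Homeomorph.smulOfNeZero R⁻¹ hR').toMeasurableEquiv).symm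
    _ = ENNReal.ofReal (R ^ finrank ℝ E) * ∫⁻ x, f x ∂μ := by
        simp [Measure.map_addHaar_smul μ hR', lintegral_smul_measure, abs_of_pos hR]

theorem exists_lintegral_min_div_one_add_pow_le {n : ℕ} (hn : finrank ℝ E < n) :
    ∃ K : ℝ, ∀ a : ℝ, 0 < a →
      ∫⁻ t, ENNReal.ofReal (min (a / (1 + ‖t‖ ^ n)) 1) ∂μ
        ≤ ENNReal.ofReal (K * a ^ ((finrank ℝ E : ℝ) / n)) := by
  set I := ∫⁻ s, ENNReal.ofReal ((1 + ‖s‖) ^ (-(n : ℝ))) ∂μ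
  have hI : I ≠ ∞ := (finite_integral_one_add_norm (by exact_mod_cast hn)).ne
  refine ⟨2 ^ n * I.toReal, fun a ha => ?_⟩
  have hn0 : (n : ℝ) ≠ 0 := by
    have : 0 < n := (Nat.zero_le _).trans_lt hn
    positivity
  set R := a ^ ((n : ℝ)⁻¹)
  have hR : 0 < R := by positivity
  have hRn : R ^ n = a := by
    rw [← Real.rpow_natCast, ← Real.rpow_mul ha.le, inv_mul_cancel₀ hn0, Real.rpow_one]
  have hRd : R ^ finrank ℝ E = a ^ ((finrank ℝ E : ℝ) / n) := by
    rw [← Real.rpow_natCast, ← Real.rpow_mul ha.le, inv_mul_eq_div]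
  have hpt : ∀ t : E, min (a / (1 + ‖t‖ ^ n)) 1 ≤ 2 ^ n * (1 + ‖R⁻¹ • t‖) ^ (-(n : ℝ)) := by
    intro t
    rw [norm_smul, Real.norm_of_nonneg (inv_nonneg.2 hR.le), inv_mul_eq_div,
      Real.rpow_neg (by positivity), Real.rpow_natCast, ← div_eq_mul_inv, ← hRn]
    exact min_div_one_add_pow_le n hR (norm_nonneg t)
  calc ∫⁻ t, ENNReal.ofReal (min (a / (1 + ‖t‖ ^ n)) 1) ∂μ
      ≤ ∫⁻ t, ENNReal.ofReal (2 ^ n) * ENNReal.ofReal ((1 + ‖R⁻¹ • t‖) ^ (-(n : ℝ))) ∂μ :=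
        lintegral_mono fun t => (ENNReal.ofReal_le_ofReal (hpt t)).trans_eq
          (ENNReal.ofReal_mul (by positivity))
    _ = ENNReal.ofReal (2 ^ n) * (ENNReal.ofReal (R ^ finrank ℝ E) * I) := by
        rw [lintegral_const_mul' _ _ ENNReal.ofReal_ne_top,
          lintegral_comp_inv_smul μ (fun s => ENNReal.ofReal ((1 + ‖s‖) ^ (-(n : ℝ)))) hR]
    _ = ENNReal.ofReal (2 ^ n * I.toReal * a ^ ((finrank ℝ E : ℝ) / n)) := by
        rw [← ENNReal.ofReal_toReal hI, ← ENNReal.ofReal_mul (by positivity),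
          ← ENNReal.ofReal_mul (by positivity), ENNReal.toReal_ofReal ENNReal.toReal_nonneg,
          hRd]
        congr 1
        ring

end AddHaar

theorem truncated_integral_bound_general {d : ℕ} (r : ℕ) (hr : d < r)
    (C : ℝ) (hC : 1 < C) (φ : (Fin d → ℝ) → ℝ)
    (hbound : ∀ t : Fin d → ℝ, 0 ≤ t →
      |φ t| ≤ C / (1 + Real.sqrt (∑ i, t i ^ 2) ^ r)) :
    ∃ C' : ℝ, ∀ x : ℝ, 1 < |x| →
      ∫⁻ t in {t : Fin d → ℝ | 0 ≤ t}, ENNReal.ofReal (min |x * φ t| 1)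
        ≤ ENNReal.ofReal (C' * |x| ^ ((d : ℝ) / r)) := by
  obtain ⟨K, hK⟩ := exists_lintegral_min_div_one_add_pow_le (volume : Measure (Fin d → ℝ))
    (n := r) (by rwa [finrank_fin_fun])
  have hC0 : 0 ≤ C := by linarith
  refine ⟨K * C ^ ((d : ℝ) / r), fun x hx => ?_⟩
  have hpt : ∀ t ∈ {t : Fin d → ℝ | 0 ≤ t},
      ENNReal.ofReal (min |x * φ t| 1) ≤ ENNReal.ofReal (min (C * |x| / (1 + ‖t‖ ^ r)) 1) := by
    intro t ht
    refine ENNReal.ofReal_le_ofReal (min_le_min_right _ ?_)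
    calc |x * φ t| = |x| * |φ t| := abs_mul x (φ t)
      _ ≤ |x| * (C / (1 + ‖t‖ ^ r)) := by
        gcongr
        refine (hbound t ht).trans ?_
        gcongr
        exact pi_norm_le_sqrt_sum_sq t
      _ = C * |x| / (1 + ‖t‖ ^ r) := by ring
  calc ∫⁻ t in {t : Fin d → ℝ | 0 ≤ t}, ENNReal.ofReal (min |x * φ t| 1)
      ≤ ∫⁻ t in {t : Fin d → ℝ | 0 ≤ t}, ENNReal.ofReal (min (C * |x| / (1 + ‖t‖ ^ r)) 1) :=
        setLIntegral_mono' measurableSet_Ici hpt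
    _ ≤ ∫⁻ t, ENNReal.ofReal (min (C * |x| / (1 + ‖t‖ ^ r)) 1) := setLIntegral_le_lintegral _ _
    _ ≤ ENNReal.ofReal (K * (C * |x|) ^ ((finrank ℝ (Fin d → ℝ) : ℝ) / r)) :=
        hK _ (by positivity)
    _ = ENNReal.ofReal (K * C ^ ((d : ℝ) / r) * |x| ^ ((d : ℝ) / r)) := by
        rw [finrank_fin_fun, Real.mul_rpow hC0 (abs_nonneg x), mul_assoc]

/-- The inequality `∫_{ℝ₊^d} (|x φ(t)| ∧ 1) dt ≤ C' |x|^{d/r}` for `|x| > 1`, when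
`|φ(t)| ≤ C/(1+|t|^r)` with `r > d`. -/
theorem truncated_integral_bound {d : ℕ} (hd : 0 < d) (r : ℕ) (hr : d < r)
    (C : ℝ) (hC : 1 < C) (φ : (Fin d → ℝ) → ℝ) (hmeas : Measurable φ)
    (hbound : ∀ t : Fin d → ℝ, 0 ≤ t →
      |φ t| ≤ C / (1 + Real.sqrt (∑ i, t i ^ 2) ^ r)) :
    ∃ C' : ℝ, ∀ x : ℝ, 1 < |x| →
      ∫⁻ t in {t : Fin d → ℝ | 0 ≤ t}, ENNReal.ofReal (min |x * φ t| 1)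
        ≤ ENNReal.ofReal (C' * |x| ^ ((d : ℝ) / r)) :=
  truncated_integral_bound_general r hr C hC φ hbound
end
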